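/- arXiv:2410.07685 — 6 statements merged into one kernel-verified Lean document; each statement's English description precedes it below -/
import Mathlib

section
/- If G is the disjoint union of graphs G_1, ..., G_m, then the graph resilience of G equals the maximum of the resiliences of the G_i. -/
open SimpleGraph

/-- One step of a disintegration: `D` consists of exactly one vertex from each
connected component of the subgraph of `G` induced on `R`. -/
def DisStep {V : Type*} (G : SimpleGraph V) (R D : Set V) : Prop :=
  ∃ hsub : D ⊆ R,
    (∀ (v w : V) (hv : v ∈ D) (hw : w ∈ D), v ≠ w →
      (G.induce R).connectedComponentMk ⟨v, hsub hv⟩ ≠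
        (G.induce R).connectedComponentMk ⟨w, hsub hw⟩) ∧
    (∀ c : (G.induce R).ConnectedComponent, ∃ (v : V) (hv : v ∈ D),
      (G.induce R).connectedComponentMk ⟨v, hsub hv⟩ = c)

/-- `(D 0, D 1, ..., D (r-1))` is a disintegration of `G`: the steps partition the
vertex set and each step removes exactly one vertex per connected component of what remains. -/
def IsDisintegration {V : Type*} (G : SimpleGraph V) (D : ℕ → Set V) (r : ℕ) : Prop :=
  (∀ i, r ≤ i → D i = ∅) ∧ (⋃ i, D i) = Set.univ ∧
    ∀ i, DisStep G (Set.univ \ ⋃ j < i, D j) (D i)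

/-- The graph resilience: minimal length of a disintegration. -/
noncomputable def resilience {V : Type*} (G : SimpleGraph V) : ℕ :=
  sInf {r | ∃ D, IsDisintegration G D r}

/-- Disjoint union of a family of graphs. -/
def disjUnion {ι : Type*} {W : ι → Type*} (G : ∀ i, SimpleGraph (W i)) :
    SimpleGraph (Σ i, W i) :=
  SimpleGraph.fromRel (fun x y => ∃ h : x.1 = y.1, (G y.1).Adj (h ▸ x.2) y.2)

/-! ### Auxiliary lemmas -/

section Family
variable {ι : Type*} {W : ι → Type*} (H : ∀ i, SimpleGraph (W i))

lemma disjUnion_adj_fst {x y : Σ i, W i} (h : (disjUnion H).Adj x y) : x.1 = y.1 := by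
  rcases h with ⟨-, ⟨h, -⟩ | ⟨h, -⟩⟩
  · exact h
  · exact h.symm

lemma disjUnion_adj_same {i : ι} {a b : W i} :
    (disjUnion H).Adj ⟨i, a⟩ ⟨i, b⟩ ↔ (H i).Adj a b := by
  constructor
  · rintro ⟨hne, ⟨h, hadj⟩ | ⟨h, hadj⟩⟩
    · exact hadj
    · exact hadj.symm
  · intro hadj
    refine ⟨fun h => hadj.ne (eq_of_heq (Sigma.mk.inj_iff.mp h).2), Or.inl ⟨rfl, hadj⟩⟩

lemma disjUnion_walk {x y : Σ i, W i} (w : (disjUnion H).Walk x y) :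
    ∃ h : x.1 = y.1, (H y.1).Reachable (h ▸ x.2) y.2 := by
  induction w with
  | nil => exact ⟨rfl, Reachable.refl _⟩
  | @cons u v z hadj w ih =>
    obtain ⟨i, a⟩ := u
    obtain ⟨j, b⟩ := v
    obtain ⟨k, c⟩ := z
    have h1 : i = j := disjUnion_adj_fst H hadj
    subst h1
    obtain ⟨h2, hr⟩ := ih
    dsimp at h2
    subst h2
    exact ⟨rfl, ((disjUnion_adj_same H).mp hadj).reachable.trans hr⟩

lemma disjUnion_reachable_fst {x y : Σ i, W i} (h : (disjUnion H).Reachable x y) :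
    x.1 = y.1 :=
  h.elim fun w => (disjUnion_walk H w).1

lemma disjUnion_reachable_same {i : ι} {a b : W i} :
    (disjUnion H).Reachable ⟨i, a⟩ ⟨i, b⟩ ↔ (H i).Reachable a b := by
  constructor
  · intro h
    refine h.elim fun w => ?_
    obtain ⟨h, hr⟩ := disjUnion_walk H w
    exact hr
  · intro h
    exact h.map ⟨Sigma.mk i, fun hadj => (disjUnion_adj_same H).mpr hadj⟩

variable (R : Set (Σ i, W i))

/-- The induced subgraph of a disjoint union is the disjoint union of induced subgraphs. -/
def induceIso :
    disjUnion (fun i => (H i).induce (Sigma.mk i ⁻¹' R)) ≃g (disjUnion H).induce R where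
  toEquiv :=
    { toFun := fun x => ⟨⟨x.1, x.2.1⟩, x.2.2⟩
      invFun := fun x => ⟨x.1.1, x.1.2, by rw [Set.mem_preimage, Sigma.eta]; exact x.2⟩
      left_inv := fun x => rfl
      right_inv := fun x => by
        obtain ⟨⟨i, a⟩, hx⟩ := x
        rfl }
  map_rel_iff' := by
    rintro ⟨i, a, ha⟩ ⟨j, b, hb⟩
    dsimp [SimpleGraph.induce]
    rw [comap_adj]
    constructor
    · intro h
      have hij : i = j := disjUnion_adj_fst H h
      subst hij
      have h2 : (H i).Adj a b := (disjUnion_adj_same H).mp h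
      exact (disjUnion_adj_same (fun j => (H j).induce (Sigma.mk j ⁻¹' R))).mpr h2
    · intro h
      have hij : i = j := disjUnion_adj_fst _ h
      subst hij
      have h2 : ((H i).induce (Sigma.mk i ⁻¹' R)).Adj ⟨a, ha⟩ ⟨b, hb⟩ :=
        (disjUnion_adj_same (fun j => (H j).induce (Sigma.mk j ⁻¹' R))).mp h
      exact (disjUnion_adj_same H).mpr h2

variable {R}

lemma induce_mk_fst {i j : ι} {a : W i} {b : W j} (ha : (⟨i, a⟩ : Σ i, W i) ∈ R)
    (hb : (⟨j, b⟩ : Σ i, W i) ∈ R)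
    (h : ((disjUnion H).induce R).connectedComponentMk ⟨⟨i, a⟩, ha⟩ =
      ((disjUnion H).induce R).connectedComponentMk ⟨⟨j, b⟩, hb⟩) : i = j := by
  have hre : ((disjUnion H).induce R).Reachable ⟨⟨i, a⟩, ha⟩ ⟨⟨j, b⟩, hb⟩ :=
    (SimpleGraph.ConnectedComponent.eq).mp h
  have : (disjUnion (fun i => (H i).induce (Sigma.mk i ⁻¹' R))).Reachable
      ⟨i, a, ha⟩ ⟨j, b, hb⟩ := by
    have := (Iso.reachable_iff (φ := induceIso H R)
      (u := ⟨i, a, ha⟩) (v := ⟨j, b, hb⟩)).mp ?_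
    · exact this
    · exact hre
  exact disjUnion_reachable_fst _ this

lemma induce_mk_same {i : ι} {a b : W i} (ha : (⟨i, a⟩ : Σ i, W i) ∈ R)
    (hb : (⟨i, b⟩ : Σ i, W i) ∈ R) :
    ((disjUnion H).induce R).connectedComponentMk ⟨⟨i, a⟩, ha⟩ =
      ((disjUnion H).induce R).connectedComponentMk ⟨⟨i, b⟩, hb⟩ ↔
    ((H i).induce (Sigma.mk i ⁻¹' R)).connectedComponentMk ⟨a, ha⟩ =
      ((H i).induce (Sigma.mk i ⁻¹' R)).connectedComponentMk ⟨b, hb⟩ := by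
  rw [SimpleGraph.ConnectedComponent.eq, SimpleGraph.ConnectedComponent.eq]
  rw [show (⟨⟨i,a⟩,ha⟩ : ↥R) = induceIso H R ⟨i, a, ha⟩ from rfl,
    show (⟨⟨i,b⟩,hb⟩ : ↥R) = induceIso H R ⟨i, b, hb⟩ from rfl, Iso.reachable_iff]
  exact disjUnion_reachable_same _

variable (R)

lemma disStep_iff (D : Set (Σ i, W i)) :
    DisStep (disjUnion H) R D ↔
      ∀ i, DisStep (H i) (Sigma.mk i ⁻¹' R) (Sigma.mk i ⁻¹' D) := by
  constructor
  · rintro ⟨hsub, hinj, hsurj⟩ i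
    refine ⟨fun a ha => hsub ha, ?_, ?_⟩
    · intro a b ha hb hab h
      exact hinj ⟨i, a⟩ ⟨i, b⟩ ha hb
        (fun he => hab (eq_of_heq (Sigma.mk.inj_iff.mp he).2))
        ((induce_mk_same H (hsub ha) (hsub hb)).mpr h)
    · intro c
      obtain ⟨a, ha⟩ := c.exists_rep
      obtain ⟨v, hv, hveq⟩ := hsurj (((disjUnion H).induce R).connectedComponentMk
        ⟨⟨i, a.1⟩, a.2⟩)
      obtain ⟨j, b⟩ := v
      have hij : j = i := induce_mk_fst H (hsub hv) _ hveq
      subst hij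
      refine ⟨b, hv, ?_⟩
      have := (induce_mk_same H (hsub hv) _).mp hveq
      rw [this, ← ha]
      rfl
  · intro h
    have hsub : D ⊆ R := by
      rintro ⟨i, a⟩ ha
      exact (h i).choose ha
    refine ⟨hsub, ?_, ?_⟩
    · rintro ⟨i, a⟩ ⟨j, b⟩ ha hb hne heq
      have hij : i = j := induce_mk_fst H (hsub ha) (hsub hb) heq
      subst hij
      obtain ⟨hs, hinj, -⟩ := h i
      exact hinj a b ha hb (fun he => hne (by rw [he]))
        ((induce_mk_same H (hsub ha) (hsub hb)).mp heq)
    · intro c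
      obtain ⟨⟨⟨i, a⟩, hxa⟩, hc⟩ := c.exists_rep
      obtain ⟨hs, -, hsurj_i⟩ := h i
      obtain ⟨v, hv, hveq⟩ := hsurj_i
        (((H i).induce (Sigma.mk i ⁻¹' R)).connectedComponentMk ⟨a, hxa⟩)
      refine ⟨⟨i, v⟩, hv, ?_⟩
      rw [← hc]
      exact (induce_mk_same H (hsub hv) hxa).mpr hveq

variable {R}

lemma preimage_rem (D : ℕ → Set (Σ i, W i)) (i : ι) (t : ℕ) :
    Sigma.mk i ⁻¹' (Set.univ \ ⋃ j < t, D j) =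
      Set.univ \ ⋃ j < t, (Sigma.mk i ⁻¹' D j) := by
  ext a
  simp

lemma isDisintegration_iff (D : ℕ → Set (Σ i, W i)) (r : ℕ) :
    IsDisintegration (disjUnion H) D r ↔
      ∀ i, IsDisintegration (H i) (fun t => Sigma.mk i ⁻¹' D t) r := by
  constructor
  · rintro ⟨h0, h1, h2⟩ i
    refine ⟨fun t ht => by show Sigma.mk i ⁻¹' D t = ∅; rw [h0 t ht]; rfl, ?_, ?_⟩
    · ext a
      simp only [Set.mem_iUnion, Set.mem_preimage, Set.mem_univ, iff_true]
      have : (⟨i, a⟩ : Σ i, W i) ∈ ⋃ t, D t := by rw [h1]; trivial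
      exact Set.mem_iUnion.mp this
    · intro t
      rw [← preimage_rem]
      exact (disStep_iff H _ (D t)).mp (h2 t) i
  · intro h
    refine ⟨?_, ?_, ?_⟩
    · intro t ht
      ext ⟨i, a⟩
      simp only [Set.mem_empty_iff_false, iff_false]
      intro hmem
      have := (h i).1 t ht
      have : a ∈ (∅ : Set (W i)) := this ▸ hmem
      exact this
    · ext ⟨i, a⟩
      simp only [Set.mem_univ, iff_true, Set.mem_iUnion]
      have : a ∈ ⋃ t, Sigma.mk i ⁻¹' D t := by rw [(h i).2.1]; trivial
      obtain ⟨t, hat⟩ := Set.mem_iUnion.mp this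
      exact ⟨t, hat⟩
    · intro t
      rw [disStep_iff H]
      intro i
      rw [preimage_rem]
      exact (h i).2.2 t

end Family

/-! ### Existence of disintegrations for finite graphs -/

section Exists

variable {V : Type*} (G : SimpleGraph V)

/-- Pick one vertex from each connected component of the subgraph induced on `R`. -/
noncomputable def pick (R : Set V) : Set V :=
  Set.range (fun c : (G.induce R).ConnectedComponent => (c.out : V))

lemma pick_subset (R : Set V) : pick G R ⊆ R := by
  rintro v ⟨c, rfl⟩
  exact c.out.2

lemma disStep_pick (R : Set V) : DisStep G R (pick G R) := by
  refine ⟨pick_subset G R, ?_, ?_⟩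
  · rintro v w ⟨c, hc⟩ ⟨c', hc'⟩ hvw
    dsimp only at hc hc'
    have h1 : (⟨v, (pick_subset G R) ⟨c, hc⟩⟩ : ↥R) = c.out := Subtype.ext hc.symm
    have h2 : (⟨w, (pick_subset G R) ⟨c', hc'⟩⟩ : ↥R) = c'.out := Subtype.ext hc'.symm
    intro h
    rw [show (G.induce R).connectedComponentMk ⟨v, _⟩ = c by rw [h1]; exact c.out_eq,
      show (G.induce R).connectedComponentMk ⟨w, _⟩ = c' by rw [h2]; exact c'.out_eq] at h
    apply hvw
    rw [← hc, ← hc']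
    exact congrArg (fun d : (G.induce R).ConnectedComponent => (d.out : V)) h
  · intro c
    refine ⟨(c.out : V), ⟨c, rfl⟩, ?_⟩
    rw [show (⟨(c.out : V), _⟩ : ↥R) = c.out from Subtype.ext rfl]
    exact c.out_eq

lemma pick_nonempty {R : Set V} (h : R.Nonempty) : (pick G R).Nonempty := by
  obtain ⟨v, hv⟩ := h
  exact ⟨_, ⟨(G.induce R).connectedComponentMk ⟨v, hv⟩, rfl⟩⟩

/-- The descending chain of remaining sets. -/
noncomputable def remaining : ℕ → Set V
  | 0 => Set.univ
  | n + 1 => remaining n \ pick G (remaining n)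

lemma remaining_card [Fintype V] (n : ℕ) :
    remaining G n = ∅ ∨ (remaining G n).ncard + n ≤ Fintype.card V := by
  induction n with
  | zero => right; simp [remaining, Set.ncard_univ]
  | succ n ih =>
    rcases Set.eq_empty_or_nonempty (remaining G n) with he | hne
    · left; simp [remaining, he]
    · right
      rcases ih with he | ih
      · exact absurd he (Set.nonempty_iff_ne_empty.mp hne)
      have hss : remaining G (n + 1) ⊂ remaining G n := by
        rw [remaining]
        obtain ⟨v, hv⟩ := pick_nonempty G hne
        exact ⟨Set.diff_subset, fun hsub =>
          (hsub (pick_subset G _ hv)).2 hv⟩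
      have := Set.ncard_lt_ncard hss (Set.toFinite _)
      omega

lemma remaining_antitone (n : ℕ) : remaining G (n + 1) ⊆ remaining G n := by
  rw [remaining]; exact Set.diff_subset

lemma remaining_empty [Fintype V] {n : ℕ} (hn : Fintype.card V ≤ n) :
    remaining G n = ∅ := by
  have key : remaining G (Fintype.card V) = ∅ := by
    rcases remaining_card G (Fintype.card V) with h | h
    · exact h
    · have : (remaining G (Fintype.card V)).ncard = 0 := by omega
      exact (Set.ncard_eq_zero (Set.toFinite _)).mp this
  have mono : ∀ k, remaining G (Fintype.card V + k) = ∅ := by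
    intro k
    induction k with
    | zero => exact key
    | succ k ih =>
      have := remaining_antitone G (Fintype.card V + k)
      rw [ih] at this
      exact Set.subset_empty_iff.mp this
  obtain ⟨k, rfl⟩ := Nat.exists_eq_add_of_le hn
  exact mono k

lemma remaining_eq (n : ℕ) :
    remaining G n = Set.univ \ ⋃ j < n, pick G (remaining G j) := by
  induction n with
  | zero => simp [remaining]
  | succ n ih =>
    rw [remaining]
    nth_rewrite 1 [ih]
    ext v
    simp only [Set.mem_diff, Set.mem_univ, true_and, Set.mem_iUnion, not_exists]
    constructor
    · rintro ⟨h1, h2⟩ j hj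
      rcases Nat.lt_succ_iff_lt_or_eq.mp hj with hj | rfl
      · exact h1 j hj
      · exact h2
    · intro h
      exact ⟨fun j hj => h j (Nat.lt_succ_of_lt hj), h n (Nat.lt_succ_self n)⟩

lemma exists_isDisintegration [Fintype V] :
    ∃ D, IsDisintegration G D (Fintype.card V) := by
  refine ⟨fun n => pick G (remaining G n), ?_, ?_, ?_⟩
  · intro n hn
    have := remaining_empty G hn
    exact Set.subset_empty_iff.mp (this ▸ pick_subset G (remaining G n))
  · ext v
    simp only [Set.mem_univ, iff_true, Set.mem_iUnion]
    by_contra h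
    push_neg at h
    have : ∀ n, v ∈ remaining G n := by
      intro n
      induction n with
      | zero => trivial
      | succ n ih =>
        rw [remaining]
        exact ⟨ih, h n⟩
    have := this (Fintype.card V)
    rw [remaining_empty G le_rfl] at this
    exact this
  · intro n
    rw [← remaining_eq]
    exact disStep_pick G (remaining G n)

lemma isDisintegration_mono {D : ℕ → Set V} {r r' : ℕ} (h : IsDisintegration G D r)
    (hrr : r ≤ r') : IsDisintegration G D r' :=
  ⟨fun i hi => h.1 i (hrr.trans hi), h.2.1, h.2.2⟩

lemma resilience_le_iff [Fintype V] (n : ℕ) :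
    resilience G ≤ n ↔ ∃ D, IsDisintegration G D n := by
  constructor
  · intro h
    have hne : {r | ∃ D, IsDisintegration G D r}.Nonempty :=
      ⟨_, exists_isDisintegration G⟩
    obtain ⟨D, hD⟩ := Nat.sInf_mem hne
    exact ⟨D, isDisintegration_mono G hD h⟩
  · rintro ⟨D, hD⟩
    exact Nat.sInf_le ⟨D, hD⟩

end Exists

theorem stmt0 {m : ℕ} {W : Fin m → Type*} [∀ i, Fintype (W i)]
    (G : ∀ i, SimpleGraph (W i)) :
    resilience (disjUnion G) = Finset.univ.sup fun i => resilience (G i) := by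
  apply le_antisymm
  · rw [resilience_le_iff]
    have h : ∀ i, ∃ D, IsDisintegration (G i) D
        (Finset.univ.sup fun i => resilience (G i)) := by
      intro i
      exact (resilience_le_iff (G i) _).mp (Finset.le_sup (f := fun i => resilience (G i)) (Finset.mem_univ i))
    choose DD hDD using h
    refine ⟨fun t => {x : Σ i, W i | x.2 ∈ DD x.1 t}, ?_⟩
    rw [isDisintegration_iff]
    intro i
    exact hDD i
  · apply Finset.sup_le
    intro i _
    rw [resilience_le_iff]
    have hne : {r | ∃ D, IsDisintegration (disjUnion G) D r}.Nonempty :=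
      ⟨_, exists_isDisintegration (disjUnion G)⟩
    obtain ⟨D, hD⟩ := Nat.sInf_mem hne
    exact ⟨_, (isDisintegration_iff G D _).mp hD i⟩
end

section
/- For any finite graph G = (V, E) and any subset V' ⊆ V, the resilience of G is at most the resilience of the induced subgraph G \ V' plus |V'|. -/
open SimpleGraph

/-!
Let `K` be the component of `v` in `G[A ∪ {v}]`. A disintegration of `G[A]` restricts to one of
`G[A ∩ K]` and one of `G[A \ K]`, since no edge joins the two parts. Removing `v` first and then
running the disintegration of `G[A ∩ K]` one step late disintegrates `G[K]`, and running this in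
parallel with that of `G[A \ K]` disintegrates `G[A ∪ {v}]` with one step more than before.
Adding the vertices of `V'` one at a time gives the bound; starting from the empty set, the same
step shows that every finite graph has a disintegration, so the resilience is attained.
-/

namespace SimpleGraph

variable {V : Type*} {G : SimpleGraph V} {S T : Set V} {x y z : V}

def ReachableIn (G : SimpleGraph V) (S : Set V) (x y : V) : Prop :=
  ∃ p : G.Walk x y, ∀ z ∈ p.support, z ∈ S

namespace ReachableIn

lemma refl (hx : x ∈ S) : G.ReachableIn S x x := ⟨.nil, by simpa⟩

lemma symm (h : G.ReachableIn S x y) : G.ReachableIn S y x := by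
  obtain ⟨p, hp⟩ := h
  exact ⟨p.reverse, by simpa using hp⟩

lemma right_mem (h : G.ReachableIn S x y) : y ∈ S :=
  h.elim fun p hp => hp _ p.end_mem_support

lemma mono (h : G.ReachableIn S x y) (hST : S ⊆ T) : G.ReachableIn T x y := by
  obtain ⟨p, hp⟩ := h
  exact ⟨p, fun z hz => hST (hp z hz)⟩

lemma adj_left (hxy : G.Adj x y) (hx : x ∈ S) (h : G.ReachableIn S y z) :
    G.ReachableIn S x z := by
  obtain ⟨p, hp⟩ := h
  exact ⟨.cons hxy p, by simpa [hx] using hp⟩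

lemma adj_right (h : G.ReachableIn S x y) (hyz : G.Adj y z) (hz : z ∈ S) :
    G.ReachableIn S x z :=
  (adj_left hyz.symm hz h.symm).symm

lemma of_union (h : G.ReachableIn (S ∪ T) x y) (hx : x ∈ S)
    (hST : ∀ a ∈ S, ∀ b ∈ T, ¬G.Adj a b) : G.ReachableIn S x y := by
  obtain ⟨p, hp⟩ := h
  induction p with
  | nil => exact refl hx
  | cons hadj p ih =>
    simp only [Walk.support_cons, List.mem_cons, forall_eq_or_imp] at hp
    have hS : _ ∈ S := (hp.2 _ p.start_mem_support).resolve_right (hST _ hx _ · hadj)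
    exact adj_left hadj hx (ih hS hp.2)

end ReachableIn

lemma Walk.reachableIn_induce {a b : S} (p : (G.induce S).Walk a b) :
    G.ReachableIn S a b := by
  induction p with
  | nil => exact .refl (Subtype.prop _)
  | cons hadj _ ih => exact .adj_left hadj (Subtype.prop _) ih

lemma reachableIn_iff_induce_reachable (hx : x ∈ S) (hy : y ∈ S) :
    G.ReachableIn S x y ↔ (G.induce S).Reachable ⟨x, hx⟩ ⟨y, hy⟩ :=
  ⟨fun ⟨p, hp⟩ => ⟨p.induce S hp⟩, fun ⟨p⟩ => p.reachableIn_induce⟩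

lemma reachableIn_induce_iff {R : Set S} {a b : S} :
    (G.induce S).ReachableIn R a b ↔ G.ReachableIn (Subtype.val '' R) a b := by
  constructor
  · rintro ⟨p, hp⟩
    induction p with
    | nil => exact .refl ⟨_, hp _ (by simp), rfl⟩
    | cons hadj p ih =>
      simp only [Walk.support_cons, List.mem_cons, forall_eq_or_imp] at hp
      exact .adj_left hadj ⟨_, hp.1, rfl⟩ (ih hp.2)
  · rintro ⟨p, hp⟩
    have hS : ∀ z ∈ p.support, z ∈ S := fun z hz => by
      obtain ⟨w, -, rfl⟩ := hp z hz; exact w.2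
    refine ⟨p.induce S hS, fun z hz => ?_⟩
    have hz' : z.1 ∈ p.support := by simpa [Walk.support_induce] using hz
    obtain ⟨w, hw, hwz⟩ := hp z hz'
    rwa [Subtype.ext hwz] at hw

end SimpleGraph

section

variable {V : Type*} {G : SimpleGraph V}

lemma disStep_iff_s1 {R D : Set V} : DisStep G R D ↔ D ⊆ R ∧
    (∀ v ∈ D, ∀ w ∈ D, G.ReachableIn R v w → v = w) ∧ ∀ x ∈ R, ∃ v ∈ D, G.ReachableIn R v x := by
  simp only [DisStep, ConnectedComponent.forall, ne_eq, ConnectedComponent.eq, Subtype.forall,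
    exists_prop, ← reachableIn_iff_induce_reachable]
  constructor
  · rintro ⟨hDR, huniq, hcover⟩
    exact ⟨hDR, fun v hv w hw h => by_contra fun hne => huniq v w hv hw hne h, hcover⟩
  · rintro ⟨hDR, huniq, hcover⟩
    exact ⟨hDR, fun v w hv hw hne h => hne (huniq v hv w hw h), hcover⟩

namespace DisStep

variable {R R₁ R₂ D D₁ D₂ C : Set V}

lemma inter (h : DisStep G R D) (hsep : ∀ x ∈ R ∩ C, ∀ y ∈ R \ C, ¬G.Adj x y) :
    DisStep G (R ∩ C) (D ∩ C) := by
  rw [disStep_iff_s1] at h ⊢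
  obtain ⟨hDR, huniq, hcover⟩ := h
  refine ⟨Set.inter_subset_inter_left C hDR, fun v hv w hw hvw =>
    huniq v hv.1 w hw.1 (hvw.mono Set.inter_subset_left), fun x hx => ?_⟩
  obtain ⟨v, hv, hvx⟩ := hcover x hx.1
  have hxv : G.ReachableIn (R ∩ C) x v := by
    rw [← Set.inter_union_sdiff R C] at hvx
    exact hvx.symm.of_union hx hsep
  exact ⟨v, ⟨hv, hxv.right_mem.2⟩, hxv.symm⟩

lemma union (h₁ : DisStep G R₁ D₁) (h₂ : DisStep G R₂ D₂) (hdisj : Disjoint R₁ R₂)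
    (hsep : ∀ x ∈ R₁, ∀ y ∈ R₂, ¬G.Adj x y) : DisStep G (R₁ ∪ R₂) (D₁ ∪ D₂) := by
  rw [disStep_iff_s1] at h₁ h₂ ⊢
  obtain ⟨hDR₁, huniq₁, hcover₁⟩ := h₁
  obtain ⟨hDR₂, huniq₂, hcover₂⟩ := h₂
  have hsep' : ∀ x ∈ R₂, ∀ y ∈ R₁, ¬G.Adj x y := fun x hx y hy hxy => hsep y hy x hx hxy.symm
  refine ⟨Set.union_subset_union hDR₁ hDR₂, fun v hv w hw hvw => ?_, fun x hx => ?_⟩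
  · rcases hv with hv | hv
    · have hvw₁ := hvw.of_union (hDR₁ hv) hsep
      have hw₁ : w ∈ D₁ := hw.resolve_right fun hw₂ =>
        Set.disjoint_left.1 hdisj hvw₁.right_mem (hDR₂ hw₂)
      exact huniq₁ v hv w hw₁ hvw₁
    · rw [Set.union_comm] at hvw
      have hvw₂ := hvw.of_union (hDR₂ hv) hsep'
      have hw₂ : w ∈ D₂ := hw.resolve_left fun hw₁ =>
        Set.disjoint_left.1 hdisj (hDR₁ hw₁) hvw₂.right_mem
      exact huniq₂ v hv w hw₂ hvw₂
  · rcases hx with hx | hx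
    · obtain ⟨v, hv, hvx⟩ := hcover₁ x hx
      exact ⟨v, .inl hv, hvx.mono Set.subset_union_left⟩
    · obtain ⟨v, hv, hvx⟩ := hcover₂ x hx
      exact ⟨v, .inr hv, hvx.mono Set.subset_union_right⟩

lemma image_val {S : Set V} {R D : Set S} (h : DisStep (G.induce S) R D) :
    DisStep G (Subtype.val '' R) (Subtype.val '' D) := by
  rw [disStep_iff_s1] at h ⊢
  obtain ⟨hDR, huniq, hcover⟩ := h
  refine ⟨Set.image_mono hDR, ?_, ?_⟩
  · rintro _ ⟨v, hv, rfl⟩ _ ⟨w, hw, rfl⟩ hvw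
    exact congrArg Subtype.val (huniq v hv w hw (reachableIn_induce_iff.2 hvw))
  · rintro _ ⟨x, hx, rfl⟩
    obtain ⟨v, hv, hvx⟩ := hcover x hx
    exact ⟨v, ⟨v, hv, rfl⟩, reachableIn_induce_iff.1 hvx⟩

end DisStep

-- A disintegration of `G.induce A`, stated in the ambient vertex type so that vertex sets can be
-- split and enlarged without passing between subtypes.
def IsDisintegrationOn (G : SimpleGraph V) (A : Set V) (D : ℕ → Set V) (r : ℕ) : Prop :=
  (∀ i, r ≤ i → D i = ∅) ∧ (⋃ i, D i) = A ∧ ∀ i, DisStep G (A \ ⋃ j < i, D j) (D i)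

lemma isDisintegrationOn_univ {D : ℕ → Set V} {r : ℕ} :
    IsDisintegrationOn G Set.univ D r ↔ IsDisintegration G D r := Iff.rfl

namespace IsDisintegrationOn

variable {A A₁ A₂ C : Set V} {D D₁ D₂ : ℕ → Set V} {r : ℕ}

lemma empty : IsDisintegrationOn G ∅ (fun _ => ∅) 0 := by
  refine ⟨fun _ _ => rfl, Set.iUnion_empty, fun i => ?_⟩
  simp [disStep_iff_s1]

lemma mono (h : IsDisintegrationOn G A D r) {s : ℕ} (hrs : r ≤ s) :
    IsDisintegrationOn G A D s :=
  ⟨fun i hi => h.1 i (hrs.trans hi), h.2.1, h.2.2⟩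

lemma subset (h : IsDisintegrationOn G A D r) (i : ℕ) : D i ⊆ A :=
  h.2.1 ▸ Set.subset_iUnion D i

lemma inter (h : IsDisintegrationOn G A D r) (hsep : ∀ x ∈ A ∩ C, ∀ y ∈ A \ C, ¬G.Adj x y) :
    IsDisintegrationOn G (A ∩ C) (fun i => D i ∩ C) r := by
  obtain ⟨hlen, hunion, hstep⟩ := h
  refine ⟨fun i hi => by simp [hlen i hi], by rw [← Set.iUnion_inter, hunion], fun i => ?_⟩
  have hrem : (A ∩ C) \ ⋃ j < i, (D j ∩ C) = (A \ ⋃ j < i, D j) ∩ C := by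
    ext x
    simp only [Set.mem_sdiff, Set.mem_inter_iff, Set.mem_iUnion, exists_prop, not_exists, not_and]
    tauto
  rw [hrem]
  exact (hstep i).inter fun x hx y hy => hsep x ⟨hx.1.1, hx.2⟩ y ⟨hy.1.1, hy.2⟩

lemma union (h₁ : IsDisintegrationOn G A₁ D₁ r) (h₂ : IsDisintegrationOn G A₂ D₂ r)
    (hdisj : Disjoint A₁ A₂) (hsep : ∀ x ∈ A₁, ∀ y ∈ A₂, ¬G.Adj x y) :
    IsDisintegrationOn G (A₁ ∪ A₂) (fun i => D₁ i ∪ D₂ i) r := by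
  refine ⟨fun i hi => by simp [h₁.1 i hi, h₂.1 i hi],
    by rw [Set.iUnion_union_distrib, h₁.2.1, h₂.2.1], fun i => ?_⟩
  have hrem : (A₁ ∪ A₂) \ ⋃ j < i, (D₁ j ∪ D₂ j) =
      (A₁ \ ⋃ j < i, D₁ j) ∪ (A₂ \ ⋃ j < i, D₂ j) := by
    have h₁₂ : ∀ x ∈ A₁, ∀ j, x ∉ D₂ j := fun x hx j hx' =>
      Set.disjoint_left.1 hdisj hx (h₂.subset j hx')
    have h₂₁ : ∀ x ∈ A₂, ∀ j, x ∉ D₁ j := fun x hx j hx' =>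
      Set.disjoint_left.1 hdisj (h₁.subset j hx') hx
    ext x
    simp only [Set.mem_sdiff, Set.mem_union, Set.mem_iUnion, exists_prop, not_exists, not_and]
    grind
  rw [hrem]
  exact (h₁.2.2 i).union (h₂.2.2 i) (hdisj.mono Set.sdiff_subset Set.sdiff_subset)
    fun x hx y hy => hsep x hx.1 y hy.1

lemma cons (h : IsDisintegrationOn G A D r) {v : V} (hv : v ∉ A)
    (hconn : ∀ x ∈ A, G.ReachableIn (insert v A) v x) :
    IsDisintegrationOn G (insert v A) (fun | 0 => {v} | i + 1 => D i) (r + 1) := by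
  refine ⟨fun i hi => ?_, ?_, fun i => ?_⟩
  · obtain ⟨i, rfl⟩ := Nat.exists_eq_add_one_of_ne_zero (by omega : i ≠ 0)
    exact h.1 i (by omega)
  · rw [← Set.union_iUnion_nat_succ, h.2.1, Set.insert_eq]
  · cases i with
    | zero =>
      simp only [Nat.not_lt_zero, Set.iUnion_of_empty, Set.iUnion_empty, Set.sdiff_empty]
      rw [disStep_iff_s1]
      refine ⟨by simp, by simp, fun x hx => ⟨v, rfl, ?_⟩⟩
      rcases hx with rfl | hx
      · exact .refl (Set.mem_insert _ _)
      · exact hconn x hx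
    | succ i =>
      have hrem : insert v A \ ⋃ j < i + 1, (fun | 0 => {v} | i + 1 => D i) j =
          A \ ⋃ j < i, D j := by
        rw [Set.biUnion_lt_succ']
        ext x
        simp only [Set.mem_sdiff, Set.mem_insert_iff, Set.mem_union, Set.mem_singleton_iff]
        grind
      rw [hrem]
      exact h.2.2 i

lemma exists_insert (h : IsDisintegrationOn G A D r) {v : V} (hv : v ∉ A) :
    ∃ D', IsDisintegrationOn G (insert v A) D' (r + 1) := by
  set K := {x | G.ReachableIn (insert v A) v x}
  have hvK : v ∈ K := .refl (Set.mem_insert v A)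
  have hKsub : insert v (A ∩ K) ⊆ K := Set.insert_subset hvK Set.inter_subset_right
  have hsep : ∀ x ∈ insert v (A ∩ K), ∀ y ∈ A ∩ Kᶜ, ¬G.Adj x y := fun x hx y hy hxy =>
    hy.2 (ReachableIn.adj_right (hKsub hx) hxy (Set.mem_insert_of_mem v hy.1))
  have hsplit : insert v (A ∩ K) ∪ A ∩ Kᶜ = insert v A := by
    rw [Set.insert_union, Set.inter_union_compl]
  have hconn : ∀ x ∈ A ∩ K, G.ReachableIn (insert v (A ∩ K)) v x := fun x hx =>
    ReachableIn.of_union (hsplit ▸ hx.2) (Set.mem_insert v _) hsep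
  have hK := (h.inter fun x hx y hy => hsep x (Set.mem_insert_of_mem v hx) y hy).cons
    (fun hvA => hv hvA.1) hconn
  have hKc := (h.inter (C := Kᶜ) fun x hx y hy hxy =>
    hsep y (Set.mem_insert_of_mem v ⟨hy.1, not_not.1 hy.2⟩) x hx hxy.symm).mono r.le_succ
  have hdisj : Disjoint (insert v (A ∩ K)) (A ∩ Kᶜ) :=
    Set.disjoint_left.2 fun x hx hx' => hx'.2 (hKsub hx)
  exact ⟨_, hsplit ▸ hK.union hKc hdisj hsep⟩

lemma exists_union_finset (h : IsDisintegrationOn G A D r) (U : Finset V)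
    (hU : Disjoint A U) : ∃ D', IsDisintegrationOn G (A ∪ U) D' (r + U.card) := by
  classical
  induction U using Finset.induction_on with
  | empty => exact ⟨D, by simpa using h⟩
  | insert a U haU ih =>
    rw [Finset.coe_insert, Set.disjoint_insert_right] at hU
    obtain ⟨D', hD'⟩ := ih hU.2
    rw [Finset.coe_insert, Set.union_insert, Finset.card_insert_of_notMem haU, ← add_assoc]
    exact hD'.exists_insert fun ha => ha.elim hU.1 haU

end IsDisintegrationOn

lemma IsDisintegration.image_val {S : Set V} {D : ℕ → Set S} {r : ℕ}
    (h : IsDisintegration (G.induce S) D r) :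
    IsDisintegrationOn G S (fun i => Subtype.val '' D i) r := by
  obtain ⟨hlen, hunion, hstep⟩ := h
  refine ⟨fun i hi => by simp [hlen i hi], by
    rw [← Set.image_iUnion, hunion, Set.image_univ, Subtype.range_coe], fun i => ?_⟩
  have hrem : S \ ⋃ j < i, Subtype.val '' D j = Subtype.val '' (Set.univ \ ⋃ j < i, D j) := by
    rw [Set.image_sdiff Subtype.val_injective, Set.image_univ, Subtype.range_coe,
      Set.image_iUnion₂]
  rw [hrem]
  exact (hstep i).image_val

lemma exists_isDisintegration_resilience [Finite V] (G : SimpleGraph V) :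
    ∃ D, IsDisintegration G D (resilience G) := by
  have := Fintype.ofFinite V
  obtain ⟨D, hD⟩ := IsDisintegrationOn.empty.exists_union_finset (G := G) Finset.univ
    (Set.empty_disjoint _)
  exact Nat.sInf_mem (s := {r | ∃ D, IsDisintegration G D r})
    ⟨_, D, isDisintegrationOn_univ.1 (by simpa using hD)⟩

end

theorem stmt1 {V : Type*} [Fintype V] (G : SimpleGraph V) (V' : Finset V) :
    resilience G ≤ resilience (G.induce ((V' : Set V)ᶜ)) + V'.card := by
  obtain ⟨D, hD⟩ := exists_isDisintegration_resilience (G.induce ((V' : Set V)ᶜ))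
  obtain ⟨D', hD'⟩ := hD.image_val.exists_union_finset V' disjoint_compl_left
  exact Nat.sInf_le ⟨D', isDisintegrationOn_univ.1 (by simpa using hD')⟩
end

section
/- If G' is isomorphic to a subgraph of G, then the resilience of G' is at most the resilience of G. -/
open SimpleGraph

namespace Stmt3Aux

variable {W : Type*}

lemma disStep_of_sel (H : SimpleGraph W) (S : Set W)
    (sel : (H.induce S).ConnectedComponent → S)
    (hsel : ∀ c, (H.induce S).connectedComponentMk (sel c) = c) :
    DisStep H S (Subtype.val '' Set.range sel) := by
  have hsub : (Subtype.val '' Set.range sel) ⊆ S := by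
    rintro v ⟨x, _, rfl⟩; exact x.2
  refine ⟨hsub, ?_, ?_⟩
  · rintro v w hv hw hne heq
    obtain ⟨x, ⟨c, rfl⟩, rfl⟩ := hv
    obtain ⟨y, ⟨c', rfl⟩, rfl⟩ := hw
    apply hne
    simp only [Subtype.coe_eta, hsel] at heq
    rw [heq]
  · intro c
    refine ⟨(sel c : W), ⟨sel c, ⟨c, rfl⟩, rfl⟩, ?_⟩
    simp only [Subtype.coe_eta, hsel]

/-- The set remaining after `n` steps. -/
def remain (step : ℕ → Set W → Set W) : ℕ → Set W
  | 0 => Set.univ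
  | n + 1 => remain step n \ step n (remain step n)

lemma remain_antitone (step : ℕ → Set W → Set W) : Antitone (remain step) := by
  apply antitone_nat_of_succ_le
  intro n
  exact Set.diff_subset

lemma remain_eq (step : ℕ → Set W → Set W) :
    ∀ i, remain step i = Set.univ \ ⋃ j < i, step j (remain step j) := by
  intro i
  induction i with
  | zero => simp [remain]
  | succ n ih =>
      rw [Set.biUnion_lt_succ, remain, ih, Set.diff_diff]

lemma isDisintegration_of (H : SimpleGraph W) (step : ℕ → Set W → Set W)
    (hstep : ∀ i S, DisStep H S (step i S)) (r : ℕ)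
    (hr : remain step r = ∅) :
    IsDisintegration H (fun i => step i (remain step i)) r := by
  have hsub : ∀ i S, step i S ⊆ S := fun i S => (hstep i S).choose
  refine ⟨?_, ?_, ?_⟩
  · intro i hi
    have h1 : remain step i ⊆ (∅ : Set W) := hr ▸ remain_antitone step hi
    exact Set.subset_empty_iff.mp ((hsub i _).trans h1)
  · ext v
    simp only [Set.mem_iUnion, Set.mem_univ, iff_true]
    by_contra h
    push_neg at h
    have : ∀ i, v ∈ remain step i := by
      intro i
      induction i with
      | zero => exact Set.mem_univ v
      | succ n ih => exact ⟨ih, h n⟩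
    have := this r
    rw [hr] at this
    exact this
  · intro i
    rw [show (Set.univ \ ⋃ j < i, step j (remain step j)) = remain step i from
      (remain_eq step i).symm]
    exact hstep i _

lemma remain_card_empty [Fintype W] (H : SimpleGraph W) (step : ℕ → Set W → Set W)
    (hstep : ∀ i S, DisStep H S (step i S)) :
    remain step (Fintype.card W) = ∅ := by
  have hsub : ∀ i S, step i S ⊆ S := fun i S => (hstep i S).choose
  have key : ∀ i, remain step i = ∅ ∨ (remain step i).ncard + i ≤ Fintype.card W := by
    intro i
    induction i with
    | zero =>
        right
        rw [show remain step 0 = Set.univ from rfl, Set.ncard_univ, Nat.card_eq_fintype_card]; omega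
    | succ n ih =>
        rcases ih with h | h
        · left
          rw [remain, h]
          simp
        · rcases Set.eq_empty_or_nonempty (remain step (n + 1)) with h2 | h2
          · left; exact h2
          · right
            have hn : (remain step n).Nonempty := h2.mono (remain_antitone step (Nat.le_succ n))
            obtain ⟨v, hv⟩ := hn
            obtain ⟨hsub', _, hsurj⟩ := hstep n (remain step n)
            obtain ⟨w, hw, _⟩ := hsurj ((H.induce (remain step n)).connectedComponentMk ⟨v, hv⟩)
            have hss : remain step (n + 1) ⊂ remain step n := by
              refine ⟨Set.diff_subset, fun hle => ?_⟩
              have : w ∈ remain step (n + 1) := hle (hsub' hw)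
              exact this.2 hw
            have := Set.ncard_lt_ncard hss (Set.toFinite _)
            omega
  rcases key (Fintype.card W) with h | h
  · exact h
  · have : (remain step (Fintype.card W)).ncard = 0 := by omega
    exact (Set.ncard_eq_zero (Set.toFinite _)).mp this

/-- Default selection: an arbitrary representative of each component. -/
noncomputable def selOut (H : SimpleGraph W) (S : Set W)
    (c : (H.induce S).ConnectedComponent) : S :=
  (Quot.exists_rep c).choose

lemma selOut_mk (H : SimpleGraph W) (S : Set W) (c : (H.induce S).ConnectedComponent) :
    (H.induce S).connectedComponentMk (selOut H S c) = c :=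
  (Quot.exists_rep c).choose_spec

end Stmt3Aux

open Stmt3Aux in
theorem stmt3 {V V' : Type*} [Fintype V] [Fintype V']
    (G : SimpleGraph V) (G' : SimpleGraph V') (f : V' → V)
    (hinj : Function.Injective f)
    (hadj : ∀ a b, G'.Adj a b → G.Adj (f a) (f b)) :
    resilience G' ≤ resilience G := by
  classical
  -- Existence of a disintegration of G
  set stepG : ℕ → Set V → Set V :=
    fun _ S => Subtype.val '' Set.range (selOut G S) with hstepG_def
  have hstepG : ∀ i S, DisStep G S (stepG i S) :=
    fun i S => disStep_of_sel G S (selOut G S) (selOut_mk G S)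
  have hGne : {r | ∃ D, IsDisintegration G D r}.Nonempty :=
    ⟨Fintype.card V, _, isDisintegration_of G stepG hstepG _ (remain_card_empty G stepG hstepG)⟩
  -- A disintegration of G of length resilience G
  obtain ⟨D, hDG⟩ : ∃ D, IsDisintegration G D (resilience G) := Nat.sInf_mem hGne
  set r := resilience G with hr
  obtain ⟨hD0, hD1, hD2⟩ := hDG
  -- The transferred step function on G'
  set sel : ∀ (i : ℕ) (S : Set V'), (G'.induce S).ConnectedComponent → S :=
    fun i S c =>
      if h : ∃ v : S, (G'.induce S).connectedComponentMk v = c ∧ f v ∈ D i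
      then h.choose else (Quot.exists_rep c).choose with hsel_def
  have hsel : ∀ i S c, (G'.induce S).connectedComponentMk (sel i S c) = c := by
    intro i S c
    rw [hsel_def]
    dsimp only
    split_ifs with h
    · exact h.choose_spec.1
    · exact (Quot.exists_rep c).choose_spec
  set step' : ℕ → Set V' → Set V' :=
    fun i S => Subtype.val '' Set.range (sel i S) with hstep'_def
  have hstep' : ∀ i S, DisStep G' S (step' i S) :=
    fun i S => disStep_of_sel G' S (sel i S) (hsel i S)
  -- Invariant: f maps the remaining set of G' into the remaining set of G
  have hinv : ∀ i, ∀ v' ∈ remain step' i, f v' ∈ Set.univ \ ⋃ j < i, D j := by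
    intro i
    induction i with
    | zero => intro v' _; simp
    | succ n ih =>
        rintro v' ⟨hv', hv2⟩
        have hfv : f v' ∈ Set.univ \ ⋃ j < n, D j := ih v' hv'
        refine ⟨trivial, ?_⟩
        rw [Set.biUnion_lt_succ]
        rintro (h | hmem)
        · exact hfv.2 h
        -- f v' ∈ D n: derive contradiction
        · set S := remain step' n with hS
          set c := (G'.induce S).connectedComponentMk ⟨v', hv'⟩ with hc
          have hex : ∃ v : S, (G'.induce S).connectedComponentMk v = c ∧ f v ∈ D n :=
            ⟨⟨v', hv'⟩, rfl, hmem⟩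
          set w : S := hex.choose with hw
          have hwspec := hex.choose_spec
          have hselw : sel n S c = w := by
            rw [hsel_def]; dsimp only; rw [dif_pos hex]
          -- w and v' are reachable in the induced graph
          have hreach : (G'.induce S).Reachable w ⟨v', hv'⟩ :=
            (SimpleGraph.ConnectedComponent.eq).mp (hwspec.1.trans hc)
          -- map to G
          let φ : G'.induce S →g G.induce (Set.univ \ ⋃ j < n, D j) :=
            { toFun := fun x => ⟨f x.1, ih x.1 x.2⟩
              map_rel' := by
                intro a b hab
                exact hadj a.1 b.1 hab }
          have hreachG := hreach.map φ
          have hmk : (G.induce (Set.univ \ ⋃ j < n, D j)).connectedComponentMk (φ w)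
              = (G.induce (Set.univ \ ⋃ j < n, D j)).connectedComponentMk (φ ⟨v', hv'⟩) :=
            (SimpleGraph.ConnectedComponent.eq).mpr hreachG
          obtain ⟨hsubG, hinjG, _⟩ := hD2 n
          have hfw : f (w : V') = f v' := by
            by_contra hne
            apply hinjG (f (w : V')) (f v') hwspec.2 hmem hne
            have e1 : (⟨f (w : V'), hsubG hwspec.2⟩ :
                (Set.univ \ ⋃ j < n, D j : Set V)) = φ w := Subtype.ext rfl
            have e2 : (⟨f v', hsubG hmem⟩ :
                (Set.univ \ ⋃ j < n, D j : Set V)) = φ ⟨v', hv'⟩ := Subtype.ext rfl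
            rw [e1, e2]
            exact hmk
          have hwv : (w : V') = v' := hinj hfw
          apply hv2
          exact ⟨w, ⟨c, hselw⟩, hwv⟩
  -- The remaining set of G' is empty at stage r
  have hRr : (Set.univ \ ⋃ j < r, D j : Set V) = ∅ := by
    ext x
    simp only [Set.mem_diff, Set.mem_univ, true_and, Set.mem_empty_iff_false, iff_false,
      not_not]
    have hx : x ∈ ⋃ i, D i := hD1 ▸ Set.mem_univ x
    obtain ⟨i, hi⟩ := Set.mem_iUnion.mp hx
    rcases lt_or_ge i r with h | h
    · exact Set.mem_iUnion.mpr ⟨i, Set.mem_iUnion.mpr ⟨h, hi⟩⟩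
    · rw [hD0 i h] at hi; exact absurd hi (Set.notMem_empty x)
  have hremr : remain step' r = ∅ := by
    ext v
    simp only [Set.mem_empty_iff_false, iff_false]
    intro hv
    have := hinv r v hv
    rw [hRr] at this
    exact this
  have : r ∈ {r | ∃ D, IsDisintegration G' D r} :=
    ⟨_, isDisintegration_of G' step' hstep' r hremr⟩
  exact Nat.sInf_le this
end

section
/- For all natural numbers s, t ≥ 1, the resilience of the t-th power of the path graph on t(2^s − 1) vertices is at most s·t. -/
open SimpleGraph

/-- The `t`-th power of a graph: two distinct vertices are adjacent when their
graph distance in `G` is at most `t`. -/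
def powerGraph {V : Type*} (G : SimpleGraph V) (t : ℕ) : SimpleGraph V :=
  SimpleGraph.fromRel (fun a b => G.Reachable a b ∧ G.dist a b ≤ t)

/-!
Cut the path into `2 ^ s - 1` blocks of `t` consecutive vertices and give block `b` the phase
`s - 1 - v₂ (b + 1)`: phase `0` is the middle block, phase `1` the middles of the two halves, and
so on (the ruler sequence). Phase `j` is dismantled in `t` steps, step `j * t + p` removing the
vertex at offset `p` of every block of phase `j`. Edges of the `t`-th power join vertices at
distance at most `t`, so a fully removed block disconnects, while fewer than `t` removed
consecutive vertices do not. Hence before step `j * t + p` the components are exactly the cells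
between consecutive blocks `b` with `2 ^ (s - j) ∣ b + 1`, and each cell contains exactly one
block of phase `j`, which contributes exactly one vertex to the step.
-/
namespace SimpleGraph

variable {n t : ℕ}

lemma pathGraph_dist (a b : Fin n) : (pathGraph n).dist a b = Nat.dist a b := by
  refine le_antisymm ?_ ?_
  · wlog hab : a ≤ b generalizing a b
    · rw [dist_comm, Nat.dist_comm]
      exact this b a (le_of_not_ge hab)
    rw [Nat.dist_eq_sub_of_le hab]
    obtain ⟨k, hk⟩ := Nat.exists_eq_add_of_le (Fin.le_def.mp hab)
    induction k generalizing b with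
    | zero => simp [show a = b from Fin.ext hk.symm]
    | succ k ih =>
      let b' : Fin n := ⟨b - 1, by omega⟩
      have hb' : (b' : ℕ) = b - 1 := rfl
      have hadj : (pathGraph n).Adj b' b := pathGraph_adj.mpr (Or.inl (by omega))
      calc (pathGraph n).dist a b ≤ (pathGraph n).dist a b' + (pathGraph n).dist b' b :=
            hadj.reachable.dist_triangle_right a
        _ ≤ (b' - a) + 1 := by
            rw [dist_eq_one_iff_adj.mpr hadj]
            exact Nat.add_le_add_right (ih b' (Fin.le_def.mpr (by omega)) (by omega)) 1
        _ = b - a := by omega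
  · obtain ⟨w, hw⟩ := (pathGraph_preconnected n a b).exists_walk_length_eq_dist
    rw [← hw]
    clear hw
    induction w with
    | nil => simp
    | cons h w ih =>
      rw [pathGraph_adj] at h
      rw [Walk.length_cons]
      unfold Nat.dist at ih ⊢
      omega

lemma powerGraph_pathGraph_adj {a b : Fin n} :
    (powerGraph (pathGraph n) t).Adj a b ↔ a ≠ b ∧ Nat.dist a b ≤ t := by
  simp only [powerGraph, fromRel_adj, pathGraph_preconnected n _ _, pathGraph_dist,
    Nat.dist_comm (b : ℕ), true_and, or_self]

variable {R : Set (Fin n)}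

lemma not_reachable_induce_powerGraph_pathGraph_of_gap {x y : Fin n} (hx : x ∈ R) (hy : y ∈ R)
    {a : ℕ} (hgap : ∀ u ∈ R, (u : ℕ) < a ∨ a + t ≤ u) (hxa : (x : ℕ) < a)
    (hay : a + t ≤ y) :
    ¬((powerGraph (pathGraph n) t).induce R).Reachable ⟨x, hx⟩ ⟨y, hy⟩ := by
  suffices ∀ {u v : R}, ((powerGraph (pathGraph n) t).induce R).Walk u v →
      ((u : Fin n) : ℕ) < a → ((v : Fin n) : ℕ) < a by
    rintro ⟨w⟩
    have := this w hxa
    simp only at this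
    omega
  intro u v w
  induction w with
  | nil => exact id
  | @cons u v _ h _ ih =>
    rw [induce_adj, powerGraph_pathGraph_adj] at h
    have := hgap v v.2
    unfold Nat.dist at h
    omega

lemma reachable_induce_powerGraph_pathGraph_of_forall_gap {x y : Fin n} (hx : x ∈ R)
    (hy : y ∈ R) (hxy : x ≤ y)
    (hgap : ∀ a, (x : ℕ) < a → a + t ≤ y → ∃ u ∈ R, a ≤ (u : ℕ) ∧ (u : ℕ) < a + t) :
    ((powerGraph (pathGraph n) t).induce R).Reachable ⟨x, hx⟩ ⟨y, hy⟩ := by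
  induction hd : (y : ℕ) - x using Nat.strong_induction_on generalizing x with
  | _ d ih =>
  rcases eq_or_lt_of_le hxy with rfl | hlt
  · rfl
  by_cases hnear : (y : ℕ) ≤ x + t
  · refine Adj.reachable ?_
    rw [induce_adj, powerGraph_pathGraph_adj]
    unfold Nat.dist
    exact ⟨hlt.ne, by simp only; omega⟩
  obtain ⟨u, hu, hxu, hut⟩ := hgap (x + 1) (by omega) (by omega)
  have hxu' : ((powerGraph (pathGraph n) t).induce R).Adj ⟨x, hx⟩ ⟨u, hu⟩ := by
    rw [induce_adj, powerGraph_pathGraph_adj]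
    unfold Nat.dist
    exact ⟨Fin.ne_of_val_ne (by simp only; omega), by simp only; omega⟩
  refine hxu'.reachable.trans (ih ((y : ℕ) - u) (by omega) hu (Fin.le_def.mpr (by omega))
    (fun a hua hay => hgap a (by omega) hay) rfl)

end SimpleGraph

section Disintegration

variable {V : Type*} {G : SimpleGraph V}

lemma disStep_of_reachable {R D : Set V} (hDR : D ⊆ R)
    (hsep : ∀ v (hv : v ∈ D) w (hw : w ∈ D),
      (G.induce R).Reachable ⟨v, hDR hv⟩ ⟨w, hDR hw⟩ → v = w)
    (hcover : ∀ x (hx : x ∈ R), ∃ v, ∃ hv : v ∈ D,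
      (G.induce R).Reachable ⟨v, hDR hv⟩ ⟨x, hx⟩) :
    DisStep G R D := by
  refine ⟨hDR, fun v w hv hw hne heq => hne (hsep v hv w hw (ConnectedComponent.eq.mp heq)), ?_⟩
  intro c
  induction c using ConnectedComponent.ind with
  | h x =>
    obtain ⟨v, hv, hvx⟩ := hcover x x.2
    exact ⟨v, hv, ConnectedComponent.eq.mpr hvx⟩

lemma resilience_le_of_forall_disStep (f : V → ℕ) {r : ℕ} (hf : ∀ v, f v < r)
    (hstep : ∀ i < r, DisStep G {v | i ≤ f v} {v | f v = i}) : resilience G ≤ r := by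
  refine Nat.sInf_le ⟨fun i => {v | f v = i}, fun i hi => ?_, ?_, fun i => ?_⟩
  · ext v
    simpa using (hf v).trans_le hi |>.ne
  · ext v
    simp
  · have hrem : Set.univ \ ⋃ j < i, {v | f v = j} = {v | i ≤ f v} := by
      ext v
      simp
    rw [hrem]
    rcases lt_or_ge i r with hi | hi
    · exact hstep i hi
    · refine disStep_of_reachable (fun v (hv : f v = i) => hv.ge) ?_ ?_ <;>
        intro v hv <;> simp only [Set.mem_ofPred_eq] at hv <;> linarith [hf v]

end Disintegration

namespace Nat

lemma mod_two_mul_eq_self_iff {d m : ℕ} (hd : 0 < d) :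
    m % (2 * d) = d ↔ d ∣ m ∧ ¬2 * d ∣ m := by
  constructor
  · intro h
    have hm := Nat.div_add_mod m (2 * d)
    rw [h] at hm
    refine ⟨⟨2 * (m / (2 * d)) + 1, by linarith⟩, fun hdvd => ?_⟩
    rw [Nat.dvd_iff_mod_eq_zero] at hdvd
    omega
  · rintro ⟨⟨a, rfl⟩, hodd⟩
    obtain ⟨k, rfl⟩ : ∃ k, a = 2 * k + 1 := by
      obtain ⟨k, hk⟩ := Nat.even_or_odd' a
      rcases hk with rfl | rfl
      · exact absurd ⟨k, by ring⟩ hodd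
      · exact ⟨k, rfl⟩
    rw [show d * (2 * k + 1) = d + 2 * d * k by ring, Nat.add_mul_mod_self_left,
      Nat.mod_eq_of_lt (by omega)]

lemma not_dvd_of_le_of_le_of_div_eq {K m m' c : ℕ} (hm : ¬K ∣ m) (hq : m / K = m' / K)
    (hmc : m ≤ c) (hcm : c ≤ m') : ¬K ∣ c := by
  rintro ⟨e, rfl⟩
  have hc : K * e / K = m / K :=
    le_antisymm (hq ▸ Nat.div_le_div_right hcm) (Nat.div_le_div_right hmc)
  rcases Nat.eq_zero_or_pos K with rfl | hK
  · simp_all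
  rw [Nat.mul_div_cancel_left _ hK] at hc
  exact hm ⟨e, le_antisymm (hc ▸ Nat.mul_div_le m K) hmc |>.symm⟩

lemma mul_add_lt_mul_of_lt {a b r t : ℕ} (hr : r < t) (hab : a < b) : a * t + r < b * t :=
  calc a * t + r < (a + 1) * t := by rw [add_one_mul]; omega
    _ ≤ b * t := Nat.mul_le_mul_right t hab

end Nat

def rulerPhase (s b : ℕ) : ℕ := s - 1 - padicValNat 2 (b + 1)

lemma rulerPhase_lt_iff {s b j : ℕ} (hb : b + 1 < 2 ^ s) (hj : j ≤ s) :
    rulerPhase s b < j ↔ 2 ^ (s - j) ∣ b + 1 := by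
  have hval : padicValNat 2 (b + 1) < s :=
    (Nat.pow_lt_pow_iff_right (by norm_num)).mp
      ((Nat.le_of_dvd (by omega) pow_padicValNat_dvd).trans_lt hb)
  rw [padicValNat_dvd_iff_le_of_ne_one (by norm_num) (by omega), rulerPhase]
  omega

lemma rulerPhase_eq_iff {s b j : ℕ} (hb : b + 1 < 2 ^ s) (hj : j < s) :
    rulerPhase s b = j ↔ (b + 1) % 2 ^ (s - j) = 2 ^ (s - j - 1) := by
  have hpow : 2 ^ (s - j) = 2 * 2 ^ (s - (j + 1)) := by
    rw [← pow_succ']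
    congr 1
    omega
  rw [show s - j - 1 = s - (j + 1) by omega, hpow, Nat.mod_two_mul_eq_self_iff (by positivity),
    ← hpow, ← rulerPhase_lt_iff hb hj.le, ← rulerPhase_lt_iff hb hj]
  omega

def removalStep (s t v : ℕ) : ℕ := rulerPhase s (v / t) * t + v % t

def rulerCell (s t j v : ℕ) : ℕ := (v / t + 1) / 2 ^ (s - j)

section RemovalStep

variable {s t j p v : ℕ}

lemma le_rulerPhase_of_le_removalStep (ht : 0 < t) (h : j * t + p ≤ removalStep s t v) :
    j ≤ rulerPhase s (v / t) := by
  by_contra! hlt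
  have := Nat.mul_add_lt_mul_of_lt (Nat.mod_lt v ht) hlt
  rw [removalStep] at h
  omega

lemma removalStep_lt_of_rulerPhase_lt (ht : 0 < t) (h : rulerPhase s (v / t) < j) :
    removalStep s t v < j * t + p :=
  (Nat.mul_add_lt_mul_of_lt (Nat.mod_lt v ht) h).trans_le (Nat.le_add_right _ _)

lemma rulerPhase_lt_of_removalStep_lt (hp : p < t) (hv : v % t = t - 1)
    (h : removalStep s t v < j * t + p) : rulerPhase s (v / t) < j := by
  by_contra! hle
  have := Nat.mul_le_mul_right t hle
  rw [removalStep] at h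
  omega

lemma removalStep_eq_iff (ht : 0 < t) (hp : p < t) :
    removalStep s t v = j * t + p ↔ rulerPhase s (v / t) = j ∧ v % t = p := by
  constructor
  · intro h
    have hle := le_rulerPhase_of_le_removalStep ht h.ge
    have hge : rulerPhase s (v / t) ≤ j := by
      by_contra! hlt
      have := Nat.mul_add_lt_mul_of_lt hp hlt
      rw [removalStep] at h
      omega
    have hj : rulerPhase s (v / t) = j := le_antisymm hge hle
    rw [removalStep, hj] at h
    exact ⟨hj, by omega⟩
  · rintro ⟨rfl, rfl⟩
    rfl

lemma div_add_one_lt_two_pow (hv : v < t * (2 ^ s - 1)) : v / t + 1 < 2 ^ s := by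
  have ht : 0 < t := Nat.pos_of_ne_zero (by rintro rfl; simp at hv)
  have := (Nat.div_lt_iff_lt_mul ht).mpr (by rwa [mul_comm] at hv)
  have := s.one_le_two_pow
  omega

lemma removalStep_lt (hv : v < t * (2 ^ s - 1)) : removalStep s t v < s * t := by
  have ht : 0 < t := Nat.pos_of_ne_zero (by rintro rfl; simp at hv)
  have hs : s ≠ 0 := by rintro rfl; simp at hv
  have : rulerPhase s (v / t) < s := by unfold rulerPhase; omega
  exact Nat.mul_add_lt_mul_of_lt (Nat.mod_lt v ht) this

end RemovalStep

def remainingVertices (s t i : ℕ) : Set (Fin (t * (2 ^ s - 1))) := {v | i ≤ removalStep s t v}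

section Cells

variable {s t j p : ℕ}

lemma rulerCell_mono {x y : ℕ} (hxy : x ≤ y) : rulerCell s t j x ≤ rulerCell s t j y :=
  Nat.div_le_div_right (Nat.add_le_add_right (Nat.div_le_div_right hxy) 1)

lemma rulerCell_eq_of_reachable (ht : 0 < t) (hj : j < s) {x y : Fin (t * (2 ^ s - 1))}
    (hx : x ∈ remainingVertices s t (j * t + p)) (hy : y ∈ remainingVertices s t (j * t + p))
    (h : ((powerGraph (pathGraph _) t).induce (remainingVertices s t (j * t + p))).Reachable
      ⟨x, hx⟩ ⟨y, hy⟩) :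
    rulerCell s t j x = rulerCell s t j y := by
  wlog hxy : x ≤ y generalizing x y
  · exact (this hy hx h.symm (le_of_not_ge hxy)).symm
  by_contra hne
  have hK : 0 < 2 ^ (s - j) := by positivity
  have hlt : rulerCell s t j x < rulerCell s t j y := (rulerCell_mono hxy).lt_of_ne hne
  have hcy : 2 ^ (s - j) * rulerCell s t j y < y / t + 1 := by
    refine (Nat.mul_div_le _ _).lt_of_ne fun heq => ?_
    have := (rulerPhase_lt_iff (div_add_one_lt_two_pow y.2) hj.le).mpr ⟨_, heq.symm⟩
    exact this.not_ge (le_rulerPhase_of_le_removalStep ht hy)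
  have hxc : x / t + 1 < 2 ^ (s - j) * rulerCell s t j y :=
    calc x / t + 1 < 2 ^ (s - j) * (rulerCell s t j x + 1) := Nat.lt_mul_div_succ _ hK
      _ ≤ 2 ^ (s - j) * rulerCell s t j y := Nat.mul_le_mul_left _ hlt
  -- block `b`, with `b + 1` a multiple of the cell size, is fully removed and separates `x`, `y`
  obtain ⟨b, hb⟩ : ∃ b, 2 ^ (s - j) * rulerCell s t j y = b + 1 :=
    ⟨_, (Nat.sub_add_cancel (Nat.one_le_of_lt hxc)).symm⟩
  rw [hb] at hxc hcy
  refine SimpleGraph.not_reachable_induce_powerGraph_pathGraph_of_gap hx hy (a := b * t)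
    (fun u hu => ?_) ?_ ?_ h
  · by_contra! hin
    have hu' : (u : ℕ) / t = b := Nat.div_eq_of_lt_le hin.1 (by rw [add_one_mul]; exact hin.2)
    have hphase := (rulerPhase_lt_iff (div_add_one_lt_two_pow u.2) hj.le).mpr
      (by rw [hu', ← hb]; exact dvd_mul_right _ _)
    exact (removalStep_lt_of_rulerPhase_lt (p := p) ht hphase).not_ge hu
  · calc (x : ℕ) < (x / t + 1) * t := (Nat.lt_mul_div_succ _ ht).trans_eq (mul_comm _ _)
      _ ≤ b * t := Nat.mul_le_mul_right t (by omega)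
  · calc b * t + t = (b + 1) * t := (add_one_mul b t).symm
      _ ≤ y / t * t := Nat.mul_le_mul_right t (by omega)
      _ ≤ y := Nat.div_mul_le_self _ _

lemma reachable_of_rulerCell_eq (ht : 0 < t) (hj : j < s) (hp : p < t)
    {x y : Fin (t * (2 ^ s - 1))}
    (hx : x ∈ remainingVertices s t (j * t + p)) (hy : y ∈ remainingVertices s t (j * t + p))
    (hxy : x ≤ y) (hc : rulerCell s t j x = rulerCell s t j y) :
    ((powerGraph (pathGraph _) t).induce (remainingVertices s t (j * t + p))).Reachable
      ⟨x, hx⟩ ⟨y, hy⟩ := by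
  refine SimpleGraph.reachable_induce_powerGraph_pathGraph_of_forall_gap hx hy hxy
    fun a hxa hay => ?_
  -- the last vertex of the block containing `a` lies in the window and has not been removed
  have hdiv := Nat.div_add_mod' a t
  have hmod := Nat.mod_lt a ht
  have hz : a / t * t + (t - 1) < t * (2 ^ s - 1) := by omega
  refine ⟨⟨a / t * t + (t - 1), hz⟩, ?_, by simp only; omega, by simp only; omega⟩
  by_contra hrem
  have hzdiv : (a / t * t + (t - 1)) / t = a / t :=
    Nat.div_eq_of_lt_le (by omega) (by rw [add_one_mul]; omega)
  have hzmod : (a / t * t + (t - 1)) % t = t - 1 := by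
    have := Nat.div_add_mod' (a / t * t + (t - 1)) t
    rw [hzdiv] at this
    omega
  have hphase := rulerPhase_lt_of_removalStep_lt hp hzmod (not_le.mp hrem)
  rw [rulerPhase_lt_iff (div_add_one_lt_two_pow hz) hj.le] at hphase
  have hxnd : ¬2 ^ (s - j) ∣ x / t + 1 := by
    rw [← rulerPhase_lt_iff (div_add_one_lt_two_pow x.2) hj.le, not_lt]
    exact le_rulerPhase_of_le_removalStep ht hx
  refine Nat.not_dvd_of_le_of_le_of_div_eq hxnd hc ?_ ?_ hphase
  · rw [hzdiv]
    exact Nat.add_le_add_right (Nat.div_le_div_right (by omega)) 1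
  · exact Nat.add_le_add_right (Nat.div_le_div_right (by omega)) 1

lemma exists_removalStep_eq_rulerCell_eq (ht : 0 < t) (hj : j < s) (hp : p < t)
    (x : Fin (t * (2 ^ s - 1))) :
    ∃ u : Fin (t * (2 ^ s - 1)), removalStep s t u = j * t + p ∧
      rulerCell s t j u = rulerCell s t j x := by
  set q := rulerCell s t j x
  have hsplit : 2 ^ s = 2 ^ j * 2 ^ (s - j) := by rw [← pow_add]; congr 1; omega
  have hq : q < 2 ^ j :=
    (Nat.div_lt_iff_lt_mul (by positivity)).mpr (hsplit ▸ div_add_one_lt_two_pow x.2)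
  have hhalf : 2 ^ (s - j - 1) < 2 ^ (s - j) := Nat.pow_lt_pow_right one_lt_two (by omega)
  -- the middle block `b` of the cell `q`
  obtain ⟨b, hb⟩ : ∃ b, b + 1 = 2 ^ (s - j) * q + 2 ^ (s - j - 1) :=
    ⟨_, Nat.sub_add_cancel (Nat.le_add_left_of_le Nat.one_le_two_pow)⟩
  have hbs : b + 1 < 2 ^ s :=
    calc b + 1 < 2 ^ (s - j) * (q + 1) := by
          rw [hb, mul_add_one]
          exact Nat.add_lt_add_left hhalf _
      _ ≤ 2 ^ (s - j) * 2 ^ j := Nat.mul_le_mul_left _ hq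
      _ = 2 ^ s := by rw [hsplit, mul_comm]
  have hu : b * t + p < t * (2 ^ s - 1) :=
    calc b * t + p < (b + 1) * t := by rw [add_one_mul]; omega
      _ ≤ (2 ^ s - 1) * t := Nat.mul_le_mul_right t (by omega)
      _ = t * (2 ^ s - 1) := mul_comm _ _
  have hudiv : (b * t + p) / t = b := Nat.div_eq_of_lt_le (by omega) (by rw [add_one_mul]; omega)
  have humod : (b * t + p) % t = p := by
    have := Nat.div_add_mod' (b * t + p) t
    rw [hudiv] at this
    omega
  refine ⟨⟨b * t + p, hu⟩, (removalStep_eq_iff ht hp).mpr ⟨?_, humod⟩, ?_⟩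
  · rw [hudiv, rulerPhase_eq_iff hbs hj, hb, Nat.mul_add_mod, Nat.mod_eq_of_lt hhalf]
  · rw [rulerCell, Fin.val_mk, hudiv, hb, Nat.mul_add_div (by positivity),
      Nat.div_eq_of_lt hhalf, add_zero]

lemma eq_of_removalStep_eq_of_rulerCell_eq (ht : 0 < t) (hj : j < s) (hp : p < t)
    {u w : Fin (t * (2 ^ s - 1))} (hu : removalStep s t u = j * t + p)
    (hw : removalStep s t w = j * t + p) (hc : rulerCell s t j u = rulerCell s t j w) :
    u = w := by
  obtain ⟨hu1, hu2⟩ := (removalStep_eq_iff ht hp).mp hu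
  obtain ⟨hw1, hw2⟩ := (removalStep_eq_iff ht hp).mp hw
  rw [rulerPhase_eq_iff (div_add_one_lt_two_pow u.2) hj] at hu1
  rw [rulerPhase_eq_iff (div_add_one_lt_two_pow w.2) hj] at hw1
  have hblock : (u : ℕ) / t = w / t := by
    have := Nat.div_add_mod' ((u : ℕ) / t + 1) (2 ^ (s - j))
    have := Nat.div_add_mod' ((w : ℕ) / t + 1) (2 ^ (s - j))
    unfold rulerCell at hc
    rw [hc] at *
    omega
  ext
  rw [← Nat.div_add_mod' u t, ← Nat.div_add_mod' w t, hblock, hu2, hw2]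

lemma disStep_removalStep (ht : 0 < t) (hj : j < s) (hp : p < t) :
    DisStep (powerGraph (pathGraph (t * (2 ^ s - 1))) t) (remainingVertices s t (j * t + p))
      {v | removalStep s t v = j * t + p} := by
  refine disStep_of_reachable (fun v hv => (hv : removalStep s t v = j * t + p).ge)
    (fun v hv w hw hvw => eq_of_removalStep_eq_of_rulerCell_eq ht hj hp hv hw
      (rulerCell_eq_of_reachable ht hj _ _ hvw)) fun x hx => ?_
  obtain ⟨u, hu, hc⟩ := exists_removalStep_eq_rulerCell_eq ht hj hp x
  refine ⟨u, hu, ?_⟩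
  rcases le_total u x with hux | hxu
  · exact reachable_of_rulerCell_eq ht hj hp _ hx hux hc
  · exact (reachable_of_rulerCell_eq ht hj hp hx _ hxu hc.symm).symm

end Cells

theorem stmt11_general (s t : ℕ) :
    resilience (powerGraph (SimpleGraph.pathGraph (t * (2 ^ s - 1))) t) ≤ s * t := by
  refine resilience_le_of_forall_disStep (fun v : Fin (t * (2 ^ s - 1)) => removalStep s t v)
    (fun v => removalStep_lt v.isLt) fun i hi => ?_
  have ht : 0 < t := Nat.pos_of_mul_pos_left (Nat.zero_lt_of_lt hi)
  have := disStep_removalStep (p := i % t) ht ((Nat.div_lt_iff_lt_mul ht).mpr hi) (Nat.mod_lt i ht)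
  rwa [Nat.div_add_mod'] at this

theorem stmt11 (s t : ℕ) (hs : 1 ≤ s) (ht : 1 ≤ t) :
    resilience (powerGraph (SimpleGraph.pathGraph (t * (2 ^ s - 1))) t) ≤ s * t :=
  stmt11_general s t
end

section
/- If p is an L-Lipschitz probability density on [0,1)^d, and q is the piecewise-constant (normalized) histogram density obtained by setting the value on each of the b^d axis-aligned cubes of side 1/b equal to the value of p at the cube's centroid and then normalizing, then ‖p − q‖₁ ≤ √d · L / b (provided the normalization constant is nonzero). -/
open MeasureTheory

/-- The half-open unit cube `[0,1)^d`. -/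
def cube (d : ℕ) : Set (Fin d → ℝ) := {x | ∀ i, x i ∈ Set.Ico (0 : ℝ) 1}

/-- The centroid of the axis-aligned bin of side `1/b` containing `x`. -/
noncomputable def binCentroid (d b : ℕ) (x : Fin d → ℝ) : Fin d → ℝ :=
  fun i => ((⌊(b : ℝ) * x i⌋ : ℝ) + 1 / 2) / b

/-!
Every point lies within Euclidean distance `√d / (2b)` of the centroid of its bin, so
`|p - p ∘ c| ≤ L √d / (2b)` pointwise on the unit cube, and the same bound holds for
`∫ |p - p ∘ c|`. Normalizing costs at most as much again: `|Z - 1| = |∫ (p ∘ c - p)|` is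
bounded by that integral, and `∫ |p ∘ c - p ∘ c / Z| = |Z - 1|` since `p ∘ c ≥ 0`.
-/

open Set

lemma sqrt_sum_sq_le_sqrt_card_mul {ι : Type*} [Fintype ι] {v : ι → ℝ} {r : ℝ}
    (hr : 0 ≤ r) (hv : ∀ i, |v i| ≤ r) :
    √(∑ i, v i ^ 2) ≤ √(Fintype.card ι) * r := by
  have hsum : ∑ i, v i ^ 2 ≤ Fintype.card ι * r ^ 2 := by
    calc ∑ i, v i ^ 2 ≤ ∑ _i : ι, r ^ 2 :=
          Finset.sum_le_sum fun i _ => sq_le_sq' (abs_le.1 (hv i)).1 (abs_le.1 (hv i)).2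
      _ = Fintype.card ι * r ^ 2 := by simp
  calc √(∑ i, v i ^ 2) ≤ √(Fintype.card ι * r ^ 2) := Real.sqrt_le_sqrt hsum
    _ = √(Fintype.card ι) * r := by rw [Real.sqrt_mul (Nat.cast_nonneg _), Real.sqrt_sq hr]

lemma lipschitzOnWith_of_abs_sub_le_mul_sqrt {d : ℕ} {p : (Fin d → ℝ) → ℝ}
    {s : Set (Fin d → ℝ)} {L : ℝ} (hL : 0 ≤ L)
    (hp : ∀ x ∈ s, ∀ y ∈ s, |p x - p y| ≤ L * √(∑ i, (x i - y i) ^ 2)) :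
    LipschitzOnWith (L * √d).toNNReal p s := by
  refine LipschitzOnWith.of_dist_le' fun x hx y hy => ?_
  have hxy : √(∑ i, (x i - y i) ^ 2) ≤ √d * dist x y := by
    simpa only [Fintype.card_fin, Pi.sub_apply] using
      sqrt_sum_sq_le_sqrt_card_mul (v := x - y) dist_nonneg
      fun i => by simpa only [Pi.sub_apply, Real.dist_eq] using dist_le_pi_dist x y i
  calc dist (p x) (p y) = |p x - p y| := Real.dist_eq _ _
    _ ≤ L * (√d * dist x y) := (hp x hx y hy).trans (mul_le_mul_of_nonneg_left hxy hL)
    _ = L * √d * dist x y := by ring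

lemma LipschitzOnWith.integrableOn_comp {X Y : Type*} [PseudoMetricSpace X] [MeasurableSpace X]
    [OpensMeasurableSpace X] [MeasurableSpace Y] {μ : Measure Y} {K : NNReal} {p : X → ℝ}
    {s : Set X} (hp : LipschitzOnWith K p s) (hs : Bornology.IsBounded s) {t : Set Y}
    (ht : MeasurableSet t) (hμt : μ t ≠ ⊤) {g : Y → X} (hg : Measurable g)
    (hgt : MapsTo g t s) :
    IntegrableOn (fun y => p (g y)) t μ := by
  -- `p ∘ g` need not be measurable, but `q ∘ g` is for a Lipschitz extension `q` of `p`.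
  obtain ⟨q, hq, hpq⟩ := hp.extend_real
  obtain ⟨C, hC⟩ := isBounded_iff_forall_norm_le.1 (hq.isBounded_image hs)
  have hqg : IntegrableOn (fun y => q (g y)) t μ :=
    Measure.integrableOn_of_bounded hμt (hq.continuous.measurable.comp hg).aestronglyMeasurable
      (ae_restrict_of_forall_mem ht fun y hy => hC _ (mem_image_of_mem q (hgt hy)))
  exact hqg.congr_fun (fun y hy => (hpq (hgt hy)).symm) ht

lemma integral_abs_sub_div_integral_le {α : Type*} [MeasurableSpace α] {μ : Measure α}
    {f g : α → ℝ} (hf : Integrable f μ) (hg : Integrable g μ) (hg0 : 0 ≤ᵐ[μ] g)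
    (hf1 : ∫ x, f x ∂μ = 1) (hZ : ∫ x, g x ∂μ ≠ 0) :
    ∫ x, |f x - g x / ∫ y, g y ∂μ| ∂μ ≤ 2 * ∫ x, |f x - g x| ∂μ := by
  set Z := ∫ y, g y ∂μ
  have hZpos : 0 < Z := (integral_nonneg_of_ae hg0).lt_of_ne' hZ
  have hZ1 : |Z - 1| ≤ ∫ x, |f x - g x| ∂μ := by
    rw [← hf1, ← integral_sub hg hf]
    simpa only [abs_sub_comm] using
      abs_integral_le_integral_abs (μ := μ) (f := fun x => g x - f x)
  have hpt : ∀ᵐ x ∂μ, |f x - g x / Z| ≤ |f x - g x| + |1 - 1 / Z| * g x := by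
    filter_upwards [hg0] with x hx
    calc |f x - g x / Z| ≤ |f x - g x| + |g x - g x / Z| := abs_sub_le _ _ _
      _ = |f x - g x| + |1 - 1 / Z| * g x := by
        rw [show g x - g x / Z = (1 - 1 / Z) * g x by ring, abs_mul, abs_of_nonneg hx]
  have hscale : |1 - 1 / Z| * Z = |Z - 1| := by
    rw [← abs_of_pos hZpos, ← abs_mul, abs_of_pos hZpos]
    congr 1
    field_simp
  calc ∫ x, |f x - g x / Z| ∂μ ≤ ∫ x, (|f x - g x| + |1 - 1 / Z| * g x) ∂μ :=
        integral_mono_ae (hf.sub (hg.div_const Z)).abs ((hf.sub hg).abs.add (hg.const_mul _)) hpt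
    _ = ∫ x, |f x - g x| ∂μ + |Z - 1| := by
        rw [integral_add (f := fun x => |f x - g x|) (hf.sub hg).abs (hg.const_mul _),
          integral_const_mul, hscale]
    _ ≤ 2 * ∫ x, |f x - g x| ∂μ := by linarith

lemma cube_eq_pi (d : ℕ) : cube d = univ.pi fun _ => Ico 0 1 := by
  ext x
  simp [cube]

lemma measurableSet_cube (d : ℕ) : MeasurableSet (cube d) := by
  rw [cube_eq_pi]
  exact .univ_pi fun _ => measurableSet_Ico

lemma volume_cube (d : ℕ) : volume (cube d) = 1 := by
  simp [cube_eq_pi, volume_pi_pi]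

lemma isBounded_cube (d : ℕ) : Bornology.IsBounded (cube d) :=
  (Metric.isBounded_Icc 0 1).subset fun _ hx => ⟨fun i => (hx i).1, fun i => (hx i).2.le⟩

lemma measurable_binCentroid (d b : ℕ) : Measurable (binCentroid d b) := by
  unfold binCentroid
  fun_prop

lemma abs_sub_binCentroid_le {d b : ℕ} (hb : (0 : ℝ) < b) (x : Fin d → ℝ) (i : Fin d) :
    |x i - binCentroid d b x i| ≤ 1 / (2 * b) := by
  have h0 := Int.floor_le ((b : ℝ) * x i)
  have h1 := Int.lt_floor_add_one ((b : ℝ) * x i)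
  calc |x i - binCentroid d b x i| = |(b : ℝ) * x i - ⌊(b : ℝ) * x i⌋ - 1 / 2| / b := by
        rw [← abs_of_pos hb, ← abs_div, abs_of_pos hb, binCentroid]
        congr 1
        field_simp
        ring
    _ ≤ 1 / 2 / b := by gcongr; exact abs_le.2 ⟨by linarith, by linarith⟩
    _ = 1 / (2 * b) := by ring

lemma binCentroid_mem_cube {d b : ℕ} (hb : (0 : ℝ) < b) {x : Fin d → ℝ}
    (hx : x ∈ cube d) :
    binCentroid d b x ∈ cube d := by
  intro i
  have h0 : (0 : ℝ) ≤ ⌊(b : ℝ) * x i⌋ := by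
    exact_mod_cast Int.floor_nonneg.2 (mul_nonneg hb.le (hx i).1)
  have h1 : (⌊(b : ℝ) * x i⌋ : ℝ) + 1 ≤ b := by
    exact_mod_cast Int.floor_lt.2 (by simpa using mul_lt_mul_of_pos_left (hx i).2 hb)
  constructor
  · unfold binCentroid; positivity
  · rw [binCentroid, div_lt_one hb]; linarith

theorem stmt17 (d b : ℕ) (hb : 1 ≤ b) (L : ℝ) (hL : 0 ≤ L)
    (p : (Fin d → ℝ) → ℝ)
    (hpos : ∀ x ∈ cube d, 0 ≤ p x)
    (hint : ∫ x in cube d, p x = 1)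
    (hlip : ∀ x ∈ cube d, ∀ y ∈ cube d,
      |p x - p y| ≤ L * Real.sqrt (∑ i, (x i - y i) ^ 2))
    (Z : ℝ) (hZ : Z = ∫ x in cube d, p (binCentroid d b x)) (hZ0 : Z ≠ 0) :
    ∫ x in cube d, |p x - p (binCentroid d b x) / Z| ≤ Real.sqrt d * L / b := by
  subst hZ
  have hb0 : (0 : ℝ) < b := by exact_mod_cast hb
  have hc : MapsTo (binCentroid d b) (cube d) (cube d) := fun _ hx => binCentroid_mem_cube hb0 hx
  have hp := lipschitzOnWith_of_abs_sub_le_mul_sqrt hL hlip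
  have hvol : volume (cube d) ≠ ⊤ := by simp [volume_cube]
  have hp_int : IntegrableOn p (cube d) :=
    hp.integrableOn_comp (isBounded_cube d) (measurableSet_cube d) hvol measurable_id (mapsTo_id _)
  have hpc_int : IntegrableOn (fun x => p (binCentroid d b x)) (cube d) :=
    hp.integrableOn_comp (isBounded_cube d) (measurableSet_cube d) hvol
      (measurable_binCentroid d b) hc
  have hclose : ∀ x ∈ cube d,
      |p x - p (binCentroid d b x)| ≤ L * √d / (2 * b) := fun x hx =>
    calc |p x - p (binCentroid d b x)| ≤ L * √(∑ i, (x i - binCentroid d b x i) ^ 2) :=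
          hlip x hx _ (hc hx)
      _ ≤ L * (√d * (1 / (2 * b))) := by
          gcongr
          simpa only [Fintype.card_fin] using sqrt_sum_sq_le_sqrt_card_mul (by positivity)
            (abs_sub_binCentroid_le hb0 x)
      _ = L * √d / (2 * b) := by ring
  have hL1 : ∫ x in cube d, |p x - p (binCentroid d b x)| ≤ L * √d / (2 * b) := by
    have h := norm_setIntegral_le_of_norm_le_const (f := fun x => |p x - p (binCentroid d b x)|)
      hvol.lt_top fun x hx => by
        simpa only [norm_abs_eq_norm, Real.norm_eq_abs] using hclose x hx
    rw [Real.norm_eq_abs, measureReal_def, volume_cube, ENNReal.toReal_one, mul_one] at h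
    exact (le_abs_self _).trans h
  calc _ ≤ 2 * ∫ x in cube d, |p x - p (binCentroid d b x)| :=
        integral_abs_sub_div_integral_le hp_int hpc_int
          (ae_restrict_of_forall_mem (measurableSet_cube d) fun x hx => hpos _ (hc hx)) hint hZ0
    _ ≤ 2 * (L * √d / (2 * b)) := by gcongr
    _ = √d * L / b := by field_simp
end

section
/- Let b ≥ 1, t ≥ 1. For graphs G_1,...,G_t, the ℓ¹ ε-covering number of the set of probability tensors Markov to the disjoint union of the G_i is at most the product over i of the (ε/t)-covering numbers of the sets of probability tensors Markov to each G_i: N(T_b(⊕_i G_i), ε) ≤ ∏_i N(T_b(G_i), ε/t). -/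
open SimpleGraph

/-- `S` separates `A` from `B` in `G`: every walk from `A` to `B` meets `S`. -/
def Separates {V : Type*} (G : SimpleGraph V) (A B S : Set V) : Prop :=
  ∀ a ∈ A, ∀ b ∈ B, ∀ w : G.Walk a b, ∃ v ∈ w.support, v ∈ S

/-- Marginal of a tensor `T` on the variables in `U`, evaluated at the assignment `σ`. -/
def marginal {V : Type*} [Fintype V] [DecidableEq V] {b : ℕ}
    (T : (V → Fin b) → ℝ) (U : Finset V) (σ : V → Fin b) : ℝ :=
  ∑ x : V → Fin b, if ∀ u ∈ U, x u = σ u then T x else 0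

/-- The (global) Markov property of a probability tensor with respect to `G`:
graph separation implies conditional independence. -/
def IsMarkov {V : Type*} [Fintype V] [DecidableEq V] {b : ℕ} (G : SimpleGraph V)
    (T : (V → Fin b) → ℝ) : Prop :=
  ∀ A B S : Finset V, Disjoint A B → Disjoint A S → Disjoint B S →
    Separates G ↑A ↑B ↑S →
    ∀ σ : V → Fin b,
      marginal T (A ∪ B ∪ S) σ * marginal T S σ =
        marginal T (A ∪ S) σ * marginal T (B ∪ S) σ

/-- The set `𝒯_b(G)` of probability tensors with `b` states per variable
that are Markov with respect to `G`. -/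
def probTensors {V : Type*} [Fintype V] [DecidableEq V] (b : ℕ) (G : SimpleGraph V) :
    Set ((V → Fin b) → ℝ) :=
  {T | (∀ x, 0 ≤ T x) ∧ (∑ x, T x = 1) ∧ IsMarkov G T}

/-- ℓ¹ distance between tensors. -/
def l1Dist {α : Type*} [Fintype α] (T T' : α → ℝ) : ℝ := ∑ x, |T x - T' x|

/-- The ε-covering number of `A` (with centers in `A`) under distance `dist`. -/
noncomputable def coverNum {α : Type*} (A : Set α) (dist : α → α → ℝ) (ε : ℝ) : ℕ∞ :=
  sInf {n : ℕ∞ | ∃ C : Finset α, ↑C ⊆ A ∧ (C.card : ℕ∞) = n ∧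
    ∀ a ∈ A, ∃ c ∈ C, dist a c ≤ ε}

/-! Components of `disjUnion G` are separated by the empty set, so the Markov property makes
every `T ∈ 𝒯_b(⊕ G_i)` the tensor product of its component marginals, which are Markov for the
`G_i`; conversely tensor products of Markov tensors are Markov. Exchanging one factor of a tensor
product of ℓ¹-normalised tensors moves it in ℓ¹ by exactly the distance between the two factors,
so by a hybrid argument the products of (ε/t)-centres for the marginals form an ε-cover. -/

section CoverNum

variable {α : Type*} {A : Set α} {dist : α → α → ℝ} {ε : ℝ}

lemma coverNum_le_card {C : Finset α} (hCA : ↑C ⊆ A) (hC : ∀ a ∈ A, ∃ c ∈ C, dist a c ≤ ε) :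
    coverNum A dist ε ≤ C.card :=
  sInf_le ⟨C, hCA, rfl, hC⟩

lemma exists_cover_card_eq_coverNum (h : coverNum A dist ε ≠ ⊤) :
    ∃ C : Finset α, ↑C ⊆ A ∧ (C.card : ℕ∞) = coverNum A dist ε ∧
      ∀ a ∈ A, ∃ c ∈ C, dist a c ≤ ε := by
  let S : Set ℕ∞ := {n | ∃ C : Finset α, ↑C ⊆ A ∧ (C.card : ℕ∞) = n ∧
    ∀ a ∈ A, ∃ c ∈ C, dist a c ≤ ε}
  change sInf S ∈ S
  exact csInf_mem (Set.nonempty_iff_ne_empty.2 fun he => h (show sInf S = ⊤ by rw [he, sInf_empty]))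

lemma coverNum_empty : coverNum (∅ : Set α) dist ε = 0 :=
  nonpos_iff_eq_zero.1 <| (coverNum_le_card (C := ∅) (by simp) (by simp)).trans_eq (by simp)

lemma Set.Nonempty.coverNum_ne_zero (hA : A.Nonempty) : coverNum A dist ε ≠ 0 := by
  intro h0
  obtain ⟨C, -, hC0, hC⟩ := exists_cover_card_eq_coverNum (h0.trans_ne ENat.zero_ne_top)
  obtain ⟨a, ha⟩ := hA
  obtain ⟨c, hc, -⟩ := hC a ha
  rw [h0, Nat.cast_eq_zero, Finset.card_eq_zero] at hC0
  simp [hC0] at hc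

theorem coverNum_le_prod_of_factorization {ι : Type*} [Fintype ι] [DecidableEq ι]
    {β : ι → Type*} {B : ∀ i, Set (β i)} {e : ∀ i, β i → β i → ℝ} {δ : ι → ℝ}
    (f : (∀ i, β i) → α) (g : ∀ i, α → β i)
    (hf : ∀ c, (∀ i, c i ∈ B i) → f c ∈ A) (hg : ∀ a ∈ A, ∀ i, g i a ∈ B i)
    (hdist : ∀ a ∈ A, ∀ c, (∀ i, c i ∈ B i) → (∀ i, e i (g i a) (c i) ≤ δ i) →
      dist a (f c) ≤ ε) :
    coverNum A dist ε ≤ ∏ i, coverNum (B i) (e i) (δ i) := by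
  classical
  rcases A.eq_empty_or_nonempty with rfl | ⟨a, ha⟩
  · simp [coverNum_empty]
  have hB0 : ∀ i, coverNum (B i) (e i) (δ i) ≠ 0 :=
    fun i => Set.Nonempty.coverNum_ne_zero ⟨g i a, hg a ha i⟩
  by_cases htop : ∃ i, coverNum (B i) (e i) (δ i) = ⊤
  · obtain ⟨i, hi⟩ := htop
    exact le_top.trans_eq
      (WithTop.prod_eq_top_iff.2 ⟨⟨i, Finset.mem_univ i, hi⟩, fun j _ => hB0 j⟩).symm
  simp only [not_exists] at htop
  choose C hCB hCcard hC using fun i => exists_cover_card_eq_coverNum (htop i)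
  calc coverNum A dist ε ≤ ((Fintype.piFinset C).image f).card := by
        refine coverNum_le_card ?_ fun a ha => ?_
        · intro x hx
          obtain ⟨c, hc, rfl⟩ := Finset.mem_image.1 hx
          exact hf c fun i => hCB i (Fintype.mem_piFinset.1 hc i)
        · choose c hcC hcdist using fun i => hC i (g i a) (hg a ha i)
          exact ⟨f c, Finset.mem_image_of_mem f (Fintype.mem_piFinset.2 hcC),
            hdist a ha c (fun i => hCB i (hcC i)) hcdist⟩
    _ ≤ ∏ i, ((C i).card : ℕ∞) := by
        exact_mod_cast Finset.card_image_le.trans (Fintype.card_piFinset C).le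
    _ = ∏ i, coverNum (B i) (e i) (δ i) := by simp only [hCcard]

end CoverNum

section DisjUnion

variable {ι : Type*} {W : ι → Type*} {G : ∀ i, SimpleGraph (W i)}

lemma disjUnion_adj_fst_eq {x y : Σ i, W i} (h : (disjUnion G).Adj x y) : x.1 = y.1 := by
  obtain ⟨-, ⟨hxy, -⟩ | ⟨hyx, -⟩⟩ := (fromRel_adj _ _ _).1 h
  exacts [hxy, hyx.symm]

lemma disjUnion_adj_mk {i : ι} {a c : W i} :
    (disjUnion G).Adj ⟨i, a⟩ ⟨i, c⟩ ↔ (G i).Adj a c := by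
  simp only [disjUnion, fromRel_adj, ne_eq, Sigma.mk.inj_iff, heq_eq_eq, true_and,
    exists_const]
  exact ⟨fun ⟨_, h⟩ => h.elim id Adj.symm, fun h => ⟨h.ne, Or.inl h⟩⟩

def disjUnionInclusion (G : ∀ i, SimpleGraph (W i)) (i : ι) : G i →g disjUnion G :=
  ⟨Sigma.mk i, disjUnion_adj_mk.2⟩

lemma SimpleGraph.Walk.fst_eq_of_disjUnion {x y : Σ i, W i} (w : (disjUnion G).Walk x y) :
    x.1 = y.1 := by
  induction w with
  | nil => rfl
  | cons h _ ih => exact (disjUnion_adj_fst_eq h).trans ih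

lemma exists_walk_support_subset_of_disjUnion {i : ι} :
    ∀ {x y : Σ j, W j} (w : (disjUnion G).Walk x y) {a c : W i}, x = ⟨i, a⟩ → y = ⟨i, c⟩ →
      ∃ p : (G i).Walk a c, ∀ u ∈ p.support, (⟨i, u⟩ : Σ j, W j) ∈ w.support := by
  intro x y w
  induction w with
  | nil =>
    rintro a c rfl hy
    obtain rfl := (Sigma.mk.inj_iff.1 hy).2.eq
    exact ⟨Walk.nil, by simp⟩
  | @cons x v y h w ih =>
    rintro a c rfl hy
    obtain ⟨j, z⟩ := v
    obtain rfl : i = j := disjUnion_adj_fst_eq h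
    obtain ⟨p, hp⟩ := ih rfl hy
    refine ⟨Walk.cons (disjUnion_adj_mk.1 h) p, fun u hu => ?_⟩
    rw [Walk.support_cons, List.mem_cons] at hu ⊢
    exact hu.imp (congrArg _) (hp u)

lemma Separates.preimage_sigmaMk {A B S : Set (Σ j, W j)} (h : Separates (disjUnion G) A B S)
    (i : ι) : Separates (G i) (Sigma.mk i ⁻¹' A) (Sigma.mk i ⁻¹' B) (Sigma.mk i ⁻¹' S) := by
  intro a ha c hc p
  let φ := disjUnionInclusion G i
  obtain ⟨v, hv, hvS⟩ := h (φ a) ha (φ c) hc (p.map φ)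
  rw [Walk.support_map] at hv
  obtain ⟨u, hu, rfl⟩ := List.mem_map.1 hv
  exact ⟨u, hu, hvS⟩

lemma Separates.image_sigmaMk {i : ι} {A B S : Set (W i)} (h : Separates (G i) A B S) :
    Separates (disjUnion G) (Sigma.mk i '' A) (Sigma.mk i '' B) (Sigma.mk i '' S) := by
  rintro x ⟨a, ha, rfl⟩ y ⟨c, hc, rfl⟩ w
  obtain ⟨p, hp⟩ := exists_walk_support_subset_of_disjUnion w rfl rfl
  obtain ⟨v, hv, hvS⟩ := h a ha c hc p
  exact ⟨⟨i, v⟩, hp v hv, v, hvS, rfl⟩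

lemma separates_empty_of_fst_ne {A B : Set (Σ j, W j)} (h : ∀ a ∈ A, ∀ b ∈ B, a.1 ≠ b.1) :
    Separates (disjUnion G) A B ∅ :=
  fun a ha b hb w => (h a ha b hb w.fst_eq_of_disjUnion).elim

end DisjUnion

lemma marginal_empty {V : Type*} [Fintype V] [DecidableEq V] {b : ℕ} (T : (V → Fin b) → ℝ)
    (σ : V → Fin b) : marginal T ∅ σ = ∑ x, T x := by
  simp [marginal]

lemma marginal_univ {V : Type*} [Fintype V] [DecidableEq V] {b : ℕ} (T : (V → Fin b) → ℝ)
    (σ : V → Fin b) : marginal T Finset.univ σ = T σ := by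
  simp [marginal, ← funext_iff]

lemma sum_abs_eq_one_of_mem_probTensors {V : Type*} [Fintype V] [DecidableEq V] {b : ℕ}
    {G : SimpleGraph V} {T : (V → Fin b) → ℝ} (hT : T ∈ probTensors b G) : ∑ x, |T x| = 1 :=
  (Finset.sum_congr rfl fun x _ => abs_of_nonneg (hT.1 x)).trans hT.2.1

lemma l1Dist_triangle {α : Type*} [Fintype α] (f g h : α → ℝ) :
    l1Dist f h ≤ l1Dist f g + l1Dist g h := by
  rw [l1Dist, l1Dist, l1Dist, ← Finset.sum_add_distrib]
  exact Finset.sum_le_sum fun x _ => abs_sub_le _ _ _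

section TensorProd

variable {ι : Type*} [Fintype ι] {W : ι → Type*} {β : Type*}

def tensorProd (T : ∀ i, (W i → β) → ℝ) : ((Σ i, W i) → β) → ℝ :=
  fun x => ∏ i, T i (x ∘ Sigma.mk i)

lemma tensorProd_update_sub [DecidableEq ι] (H : ∀ i, (W i → β) → ℝ) (i : ι)
    (P Q : (W i → β) → ℝ) (x : (Σ i, W i) → β) :
    tensorProd (Function.update H i P) x - tensorProd (Function.update H i Q) x
      = tensorProd (Function.update H i (P - Q)) x := by
  simp only [tensorProd, Function.apply_update (fun j (h : (W j → β) → ℝ) => h (x ∘ Sigma.mk j)),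
    Finset.prod_update_of_mem (Finset.mem_univ i), Pi.sub_apply, sub_mul]

variable [DecidableEq ι] [∀ i, Fintype (W i)] [∀ i, DecidableEq (W i)] [Fintype β]

lemma sum_prod_comp_sigmaMk {R : Type*} [CommSemiring R] (g : ∀ i, (W i → β) → R) :
    ∑ x : (Σ i, W i) → β, ∏ i, g i (x ∘ Sigma.mk i) = ∏ i, ∑ y, g i y := by
  rw [Fintype.prod_sum]
  exact Fintype.sum_equiv (Equiv.piCurry fun _ _ => β) _ _ fun _ => rfl

lemma sum_abs_tensorProd (T : ∀ i, (W i → β) → ℝ) :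
    ∑ x, |tensorProd T x| = ∏ i, ∑ y, |T i y| := by
  simp only [tensorProd, Finset.abs_prod]
  exact sum_prod_comp_sigmaMk fun i y => |T i y|

lemma l1Dist_tensorProd_update {H : ∀ i, (W i → β) → ℝ} (hH : ∀ j, ∑ y, |H j y| = 1) (i : ι)
    (P Q : (W i → β) → ℝ) :
    l1Dist (tensorProd (Function.update H i P)) (tensorProd (Function.update H i Q))
      = l1Dist P Q := by
  simp only [l1Dist, tensorProd_update_sub, sum_abs_tensorProd,
    Function.apply_update (fun j (h : (W j → β) → ℝ) => ∑ y, |h y|),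
    Finset.prod_update_of_mem (Finset.mem_univ i), hH, Finset.prod_const_one, mul_one,
    Pi.sub_apply]

lemma l1Dist_tensorProd_le {T T' : ∀ i, (W i → β) → ℝ} (hT : ∀ i, ∑ y, |T i y| = 1)
    (hT' : ∀ i, ∑ y, |T' i y| = 1) :
    l1Dist (tensorProd T) (tensorProd T') ≤ ∑ i, l1Dist (T i) (T' i) := by
  suffices h : ∀ s : Finset ι,
      l1Dist (tensorProd (s.piecewise T T')) (tensorProd T') ≤ ∑ i ∈ s, l1Dist (T i) (T' i) by
    simpa using h Finset.univ
  intro s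
  induction s using Finset.induction_on with
  | empty => simp [l1Dist]
  | @insert i s hi ih =>
    have hH : ∀ j, ∑ y, |s.piecewise T T' j y| = 1 := fun j => by
      by_cases hj : j ∈ s <;> simp [hj, hT, hT']
    have hstep : l1Dist (tensorProd ((insert i s).piecewise T T')) (tensorProd (s.piecewise T T'))
        = l1Dist (T i) (T' i) := by
      have hs : Function.update (s.piecewise T T') i (T' i) = s.piecewise T T' :=
        Function.update_eq_self_iff.2 (Finset.piecewise_eq_of_notMem _ _ _ hi).symm
      rw [Finset.piecewise_insert, ← hs, Function.update_idem]
      exact l1Dist_tensorProd_update hH i _ _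
    calc _ ≤ l1Dist (tensorProd ((insert i s).piecewise T T')) (tensorProd (s.piecewise T T'))
          + l1Dist (tensorProd (s.piecewise T T')) (tensorProd T') := l1Dist_triangle _ _ _
      _ ≤ l1Dist (T i) (T' i) + ∑ j ∈ s, l1Dist (T j) (T' j) := by rw [hstep]; gcongr
      _ = ∑ j ∈ insert i s, l1Dist (T j) (T' j) := by rw [Finset.sum_insert hi]

end TensorProd

section Markov

variable {ι : Type*} [Fintype ι] [DecidableEq ι] {W : ι → Type*} [∀ i, Fintype (W i)]
  [∀ i, DecidableEq (W i)] {b : ℕ}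

def componentMarginal (i : ι) (T : ((Σ i, W i) → Fin b) → ℝ) : (W i → Fin b) → ℝ :=
  fun y => ∑ x, if x ∘ Sigma.mk i = y then T x else 0

lemma marginal_tensorProd (T : ∀ i, (W i → Fin b) → ℝ) (U : Finset (Σ i, W i))
    (σ : (Σ i, W i) → Fin b) :
    marginal (tensorProd T) U σ
      = ∏ i, marginal (T i) (U.preimage (Sigma.mk i) sigma_mk_injective.injOn)
          (σ ∘ Sigma.mk i) := by
  simp only [marginal]
  rw [← sum_prod_comp_sigmaMk]
  refine Finset.sum_congr rfl fun x _ => ?_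
  simp only [Finset.prod_ite_zero]
  congr 1
  simp only [Finset.mem_univ, Finset.mem_preimage, Function.comp_apply, true_implies]
  exact propext Sigma.forall

lemma marginal_componentMarginal (i : ι) (T : ((Σ i, W i) → Fin b) → ℝ) (U : Finset (W i))
    (σ : (Σ i, W i) → Fin b) :
    marginal (componentMarginal i T) U (σ ∘ Sigma.mk i)
      = marginal T (U.map (Function.Embedding.sigmaMk i)) σ := by
  simp only [marginal, componentMarginal, Finset.ite_sum_zero]
  rw [Finset.sum_comm]
  refine Finset.sum_congr rfl fun x _ => ?_
  simp only [← ite_and, and_comm (a := ∀ u ∈ U, _)]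
  simp only [ite_and]
  rw [Fintype.sum_ite_eq]
  simp

variable {G : ∀ i, SimpleGraph (W i)}

lemma tensorProd_mem_probTensors {T : ∀ i, (W i → Fin b) → ℝ}
    (hT : ∀ i, T i ∈ probTensors b (G i)) : tensorProd T ∈ probTensors b (disjUnion G) := by
  refine ⟨fun x => Finset.prod_nonneg fun i _ => (hT i).1 _, ?_, ?_⟩
  · simp only [tensorProd, sum_prod_comp_sigmaMk]
    exact Finset.prod_eq_one fun i _ => (hT i).2.1
  intro A B S hAB hAS hBS hsep σ
  simp only [marginal_tensorProd, ← Finset.prod_mul_distrib]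
  refine Finset.prod_congr rfl fun i _ => ?_
  let pre (U : Finset (Σ i, W i)) := U.preimage (Sigma.mk i) sigma_mk_injective.injOn
  have hsep_i : Separates (G i) ↑(pre A) ↑(pre B) ↑(pre S) := by
    simpa only [pre, Finset.coe_preimage] using hsep.preimage_sigmaMk i
  have key := (hT i).2.2 (pre A) (pre B) (pre S) (Finset.disjoint_preimage hAB)
    (Finset.disjoint_preimage hAS) (Finset.disjoint_preimage hBS) hsep_i (σ ∘ Sigma.mk i)
  have hpre : ∀ U V : Finset (Σ i, W i), pre (U ∪ V) = pre U ∪ pre V :=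
    fun U V => Finset.preimage_union _
  rwa [← hpre, ← hpre, ← hpre, ← hpre] at key

lemma componentMarginal_mem_probTensors (hb : 1 ≤ b) (i : ι) {T : ((Σ i, W i) → Fin b) → ℝ}
    (hT : T ∈ probTensors b (disjUnion G)) : componentMarginal i T ∈ probTensors b (G i) := by
  refine ⟨fun y => Finset.sum_nonneg fun x _ => ?_, ?_, ?_⟩
  · split_ifs
    exacts [hT.1 x, le_rfl]
  · simp only [componentMarginal]
    rw [Finset.sum_comm]
    simpa only [Fintype.sum_ite_eq] using hT.2.1
  intro A B S hAB hAS hBS hsep τ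
  obtain ⟨σ, hσ⟩ : ∃ σ : (Σ i, W i) → Fin b, σ ∘ Sigma.mk i = τ :=
    ⟨Function.extend (Sigma.mk i) τ fun _ => ⟨0, hb⟩,
      funext fun w => sigma_mk_injective.extend_apply τ _ w⟩
  simp only [← hσ, marginal_componentMarginal, Finset.map_union]
  refine hT.2.2 _ _ _ (Finset.disjoint_map _ |>.2 hAB) (Finset.disjoint_map _ |>.2 hAS)
    (Finset.disjoint_map _ |>.2 hBS) ?_ σ
  simp only [Finset.coe_map]
  exact hsep.image_sigmaMk

lemma marginal_filter_fst_mem {T : ((Σ i, W i) → Fin b) → ℝ}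
    (hT : T ∈ probTensors b (disjUnion G)) (s : Finset ι) (σ : (Σ i, W i) → Fin b) :
    marginal T (Finset.univ.filter fun v : Σ i, W i => v.1 ∈ s) σ
      = ∏ i ∈ s, componentMarginal i T (σ ∘ Sigma.mk i) := by
  induction s using Finset.induction_on with
  | empty => simpa [marginal_empty] using hT.2.1
  | @insert i s hi ih =>
    let Ai := (Finset.univ : Finset (W i)).map (Function.Embedding.sigmaMk i)
    let Bs := Finset.univ.filter fun v : Σ i, W i => v.1 ∈ s
    have hsplit : (Finset.univ.filter fun v : Σ i, W i => v.1 ∈ insert i s) = Ai ∪ Bs := by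
      ext ⟨j, w⟩
      rcases eq_or_ne i j with rfl | hij
      · simp [Ai, Bs]
      · simp [Ai, Bs, hij, hij.symm]
    have hfst : ∀ u ∈ (Ai : Set (Σ i, W i)), ∀ v ∈ (Bs : Set (Σ i, W i)), u.1 ≠ v.1 := by
      simp only [Ai, Bs, Finset.coe_map, Finset.coe_filter]
      rintro _ ⟨w, -, rfl⟩ v hv rfl
      exact hi (by simpa using hv)
    have hmk := hT.2.2 Ai Bs ∅ (Finset.disjoint_left.2 fun u hu hu' => hfst u hu u hu' rfl)
      (Finset.disjoint_empty_right _) (Finset.disjoint_empty_right _)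
      (by simpa using separates_empty_of_fst_ne hfst) σ
    simp only [Finset.union_empty, marginal_empty, hT.2.1, mul_one] at hmk
    rw [hsplit, hmk, Finset.prod_insert hi, ih, ← marginal_componentMarginal, marginal_univ]

lemma eq_tensorProd_componentMarginal {T : ((Σ i, W i) → Fin b) → ℝ}
    (hT : T ∈ probTensors b (disjUnion G)) : T = tensorProd fun i => componentMarginal i T := by
  funext σ
  simpa [marginal_univ, tensorProd] using marginal_filter_fst_mem hT Finset.univ σ

end Markov

theorem stmt18_general {t b : ℕ} (ht : 1 ≤ t) (hb : 1 ≤ b) {W : Fin t → Type*}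
    [∀ i, Fintype (W i)] [∀ i, DecidableEq (W i)]
    (G : ∀ i, SimpleGraph (W i)) (ε : ℝ) :
    coverNum (probTensors b (disjUnion G)) l1Dist ε
      ≤ ∏ i, coverNum (probTensors b (G i)) l1Dist (ε / t) := by
  refine coverNum_le_prod_of_factorization tensorProd componentMarginal
    (fun _ hc => tensorProd_mem_probTensors hc)
    (fun _ hT i => componentMarginal_mem_probTensors hb i hT) fun T hT c hc hdist => ?_
  calc l1Dist T (tensorProd c)
      = l1Dist (tensorProd fun i => componentMarginal i T) (tensorProd c) := by
        rw [← eq_tensorProd_componentMarginal hT]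
    _ ≤ ∑ i, l1Dist (componentMarginal i T) (c i) :=
        l1Dist_tensorProd_le
          (fun i => sum_abs_eq_one_of_mem_probTensors (componentMarginal_mem_probTensors hb i hT))
          (fun i => sum_abs_eq_one_of_mem_probTensors (hc i))
    _ ≤ ∑ _i : Fin t, ε / t := Finset.sum_le_sum fun i _ => hdist i
    _ = ε := by
        have ht' : (t : ℝ) ≠ 0 := by exact_mod_cast Nat.one_le_iff_ne_zero.1 ht
        simp [mul_div_cancel₀ _ ht']

theorem stmt18 {t b : ℕ} (ht : 1 ≤ t) (hb : 1 ≤ b) {W : Fin t → Type*}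
    [∀ i, Fintype (W i)] [∀ i, DecidableEq (W i)]
    (G : ∀ i, SimpleGraph (W i)) (ε : ℝ) (hε0 : 0 < ε) (hε1 : ε < 1) :
    coverNum (probTensors b (disjUnion G)) l1Dist ε
      ≤ ∏ i, coverNum (probTensors b (G i)) l1Dist (ε / t) :=
  stmt18_general ht hb G ε
end
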